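/- arXiv:1405.4376 — 7 statements merged into one kernel-verified Lean document; each statement's English description precedes it below -/
import Mathlib

section
/- Let d ≥ 1, let B̄ and S^{d−1} denote the closed unit ball and the unit sphere of ℝ^d. Let g : S^{d−1} → ℝ be continuous and let h_g : B̄ → ℝ be its convex envelope, h_g(x) = sup { a(x) : a : ℝ^d → ℝ affine and a(ℓ) ≤ g(ℓ) for all ℓ ∈ S^{d−1} }. Let l : ℝ^d → ℝ be affine with l(x) ≤ h_g(x) for all x ∈ B̄. Then { x ∈ B̄ : h_g(x) = l(x) } = convexHull { ℓ ∈ S^{d−1} : g(ℓ) = l(ℓ) }. In particular, every contact set of the convex envelope with one of its supporting affine functions is the convex hull of points of the sphere. -/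
/-!
The contact set `{h_g = l}` is convex, because `h_g` is convex and `l ≤ h_g`, and it contains
every point of the sphere where `g = l`; this gives `⊇`. Conversely, let `x` be a contact point
outside the (compact) convex hull `K` of `{g = l}`, and separate it by a functional `f` with
`f < u` on `K` and `f x > u`. Where `f ≥ u` on the sphere, `g - l` is bounded below by a positive
constant, so the tilted function `l + ε (f - u)` is still an affine minorant of `g` for small
`ε > 0`; but at `x` it exceeds `l x = h_g x`.
-/

open scoped RealInnerProductSpace
open Set

section CompactConvexHull

variable {E : Type*} [NormedAddCommGroup E] [NormedSpace ℝ E]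

theorem convexHull_range_eq_image_stdSimplex {ι : Type*} [Fintype ι] (p : ι → E) :
    convexHull ℝ (range p) = (fun w : ι → ℝ => ∑ i, w i • p i) '' stdSimplex ℝ ι := by
  classical
  have hL : (fun w : ι → ℝ => ∑ i, w i • p i) = Fintype.linearCombination ℝ p :=
    funext fun w => (Fintype.linearCombination_apply ℝ p w).symm
  rw [← convexHull_rangle_single_eq_stdSimplex, hL, LinearMap.image_convexHull, ← range_comp]
  congr 2
  ext i
  simp [Fintype.linearCombination_apply_single]

variable [FiniteDimensional ℝ E]

-- Carathéodory, with the points repeated so that their number depends only on the dimension.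
theorem exists_fin_of_mem_convexHull {s : Set E} {x : E} (hx : x ∈ convexHull ℝ s) :
    ∃ p : Fin (Module.finrank ℝ E + 1) → E, range p ⊆ s ∧ x ∈ convexHull ℝ (range p) := by
  obtain ⟨ι, _, z, w, hzs, hz, hw₀, hw₁, rfl⟩ := eq_pos_convex_span_of_mem_convexHull hx
  have : Nonempty ι := by
    by_contra! h
    simp at hw₁
  obtain ⟨j⟩ : Nonempty (ι ↪ Fin (Module.finrank ℝ E + 1)) :=
    Function.Embedding.nonempty_of_card_le (by
      simpa using hz.card_le_finrank_succ.trans (by gcongr; exact Submodule.finrank_le _))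
  have hσ := Function.invFun_surjective j.injective
  refine ⟨z ∘ Function.invFun j, by rwa [hσ.range_comp], ?_⟩
  rw [hσ.range_comp]
  exact (convex_convexHull ℝ _).sum_mem (fun i _ => (hw₀ i).le) hw₁
    fun i _ => subset_convexHull ℝ _ (mem_range_self i)

theorem isCompact_convexHull {s : Set E} (hs : IsCompact s) : IsCompact (convexHull ℝ s) := by
  set n := Module.finrank ℝ E + 1
  have hhull : convexHull ℝ s = (fun q : (Fin n → ℝ) × (Fin n → E) => ∑ i, q.1 i • q.2 i) ''
      (stdSimplex ℝ (Fin n) ×ˢ univ.pi fun _ => s) := by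
    refine Subset.antisymm (fun x hx => ?_) ?_
    · obtain ⟨p, hps, hxp⟩ := exists_fin_of_mem_convexHull hx
      rw [convexHull_range_eq_image_stdSimplex] at hxp
      obtain ⟨w, hw, rfl⟩ := hxp
      exact ⟨(w, p), ⟨hw, fun i _ => hps (mem_range_self i)⟩, rfl⟩
    · rintro x ⟨⟨w, p⟩, ⟨hw, hp⟩, rfl⟩
      exact (convex_convexHull ℝ s).sum_mem (fun i _ => hw.1 i) hw.2
        fun i _ => subset_convexHull ℝ s (hp i (mem_univ i))
  rw [hhull]
  exact ((isCompact_stdSimplex ℝ (Fin n)).prod (isCompact_univ_pi fun _ => hs)).image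
    (continuous_finsetSum _ fun i _ =>
      ((continuous_apply i).comp continuous_fst).smul ((continuous_apply i).comp continuous_snd))

end CompactConvexHull

theorem IsCompact.exists_pos_mul_le {X : Type*} [TopologicalSpace X] {S : Set X}
    (hS : IsCompact S) {φ ψ : X → ℝ} (hφ : ContinuousOn φ S) (hψ : Continuous ψ)
    (hφ₀ : ∀ x ∈ S, 0 ≤ φ x) (hpos : ∀ x ∈ S, 0 ≤ ψ x → 0 < φ x) :
    ∃ ε > 0, ∀ x ∈ S, ε * ψ x ≤ φ x := by
  set K := S ∩ ψ ⁻¹' Ici 0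
  have hK : IsCompact K := hS.inter_right (isClosed_Ici.preimage hψ)
  obtain ⟨C, hC⟩ := hK.bddAbove_image (f := fun x => ψ x / φ x) <|
    hψ.continuousOn.div (hφ.mono inter_subset_left) fun x hx => (hpos x hx.1 hx.2).ne'
  have hC₁ : 0 < max C 1 := lt_max_of_lt_right one_pos
  refine ⟨(max C 1)⁻¹, inv_pos.2 hC₁, fun x hx => ?_⟩
  rcases le_or_gt 0 (ψ x) with hψx | hψx
  · have hφx := hpos x hx hψx
    have hle : ψ x / φ x ≤ max C 1 := (hC ⟨x, ⟨hx, hψx⟩, rfl⟩).trans (le_max_left _ _)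
    rw [div_le_iff₀ hφx] at hle
    rw [inv_mul_le_iff₀ hC₁]
    linarith
  · nlinarith [inv_pos.2 hC₁, hφ₀ x hx]

section ConvexEnvelope

variable {E : Type*} [NormedAddCommGroup E] [InnerProductSpace ℝ E]

noncomputable def convexEnvelope (S : Set E) (g : E → ℝ) (x : E) : ℝ :=
  sSup {y : ℝ | ∃ v : E, ∃ β : ℝ, (∀ ℓ ∈ S, ⟪v, ℓ⟫ + β ≤ g ℓ) ∧ y = ⟪v, x⟫ + β}

variable {S : Set E} {g : E → ℝ} {x : E}

theorem le_convexEnvelope (hg : BddAbove (g '' S)) (hx : x ∈ convexHull ℝ S) {v : E} {β : ℝ}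
    (hvβ : ∀ ℓ ∈ S, ⟪v, ℓ⟫ + β ≤ g ℓ) : ⟪v, x⟫ + β ≤ convexEnvelope S g x := by
  obtain ⟨c, hc⟩ := hg
  refine le_csSup ⟨c, ?_⟩ ⟨v, β, hvβ, rfl⟩
  rintro _ ⟨v', β', hv'β', rfl⟩
  have hS : S ⊆ {z | ⟪v', z⟫ + β' ≤ c} := fun ℓ hℓ =>
    (hv'β' ℓ hℓ).trans (hc (mem_image_of_mem g hℓ))
  refine convexHull_min hS ?_ hx
  have hhalf : {z | ⟪v', z⟫ + β' ≤ c} = {z | innerₛₗ ℝ v' z ≤ c - β'} := by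
    simp only [coe_innerₛₗ_apply, le_sub_iff_add_le]
  rw [hhalf]
  exact convex_halfSpace_le (innerₛₗ ℝ v').isLinear (c - β')

theorem convexEnvelope_le (hg : BddBelow (g '' S)) {c : ℝ}
    (h : ∀ (v : E) (β : ℝ), (∀ ℓ ∈ S, ⟪v, ℓ⟫ + β ≤ g ℓ) → ⟪v, x⟫ + β ≤ c) :
    convexEnvelope S g x ≤ c := by
  obtain ⟨m, hm⟩ := hg
  refine csSup_le ⟨m, 0, m, fun ℓ hℓ => ?_, by simp⟩ ?_
  · simpa using hm (mem_image_of_mem g hℓ)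
  · rintro _ ⟨v, β, hvβ, rfl⟩
    exact h v β hvβ

theorem convexEnvelope_le_self (hg : BddBelow (g '' S)) {ℓ : E} (hℓ : ℓ ∈ S) :
    convexEnvelope S g ℓ ≤ g ℓ :=
  convexEnvelope_le hg fun _ _ hvβ => hvβ ℓ hℓ

theorem convexOn_convexEnvelope (hgA : BddAbove (g '' S)) (hgB : BddBelow (g '' S)) :
    ConvexOn ℝ (convexHull ℝ S) (convexEnvelope S g) := by
  refine ⟨convex_convexHull ℝ S, fun x hx y hy a b ha hb hab => ?_⟩
  refine convexEnvelope_le hgB fun v β hvβ => ?_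
  calc ⟪v, a • x + b • y⟫ + β = a * (⟪v, x⟫ + β) + b * (⟪v, y⟫ + β) := by
        rw [inner_add_right, real_inner_smul_right, real_inner_smul_right]
        linear_combination (-β) * hab
    _ ≤ a * convexEnvelope S g x + b * convexEnvelope S g y := by
        gcongr <;> exact le_convexEnvelope hgA ‹_› hvβ

variable {v₀ : E} {β₀ : ℝ}

theorem convexHull_subset_contactSet (hgA : BddAbove (g '' S)) (hgB : BddBelow (g '' S))
    (hl : ∀ x ∈ convexHull ℝ S, ⟪v₀, x⟫ + β₀ ≤ convexEnvelope S g x) :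
    convexHull ℝ {ℓ ∈ S | g ℓ = ⟪v₀, ℓ⟫ + β₀} ⊆
      {x ∈ convexHull ℝ S | convexEnvelope S g x = ⟪v₀, x⟫ + β₀} := by
  refine convexHull_min ?_ ?_
  · rintro ℓ ⟨hℓ, hgℓ⟩
    have hℓ' := subset_convexHull ℝ S hℓ
    exact ⟨hℓ', le_antisymm (hgℓ ▸ convexEnvelope_le_self hgB hℓ) (hl ℓ hℓ')⟩
  · have hconv := ((convexOn_convexEnvelope hgA hgB).sub
      (((innerₛₗ ℝ v₀).concaveOn (convex_convexHull ℝ S)).add_const β₀)).convex_le 0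
    convert hconv using 1
    refine Set.ext fun x => and_congr_right fun hx => ?_
    simp only [Pi.sub_apply, Pi.add_apply, coe_innerₛₗ_apply, sub_nonpos]
    exact ⟨le_of_eq, fun h => le_antisymm h (hl x hx)⟩

theorem mem_convexHull_contactSet [FiniteDimensional ℝ E] (hS : IsCompact S)
    (hg : ContinuousOn g S) (hlg : ∀ ℓ ∈ S, ⟪v₀, ℓ⟫ + β₀ ≤ g ℓ) (hx : x ∈ convexHull ℝ S)
    (hxl : convexEnvelope S g x = ⟪v₀, x⟫ + β₀) :
    x ∈ convexHull ℝ {ℓ ∈ S | g ℓ = ⟪v₀, ℓ⟫ + β₀} := by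
  set T := {ℓ ∈ S | g ℓ = ⟪v₀, ℓ⟫ + β₀}
  have hcont : ContinuousOn (fun ℓ => g ℓ - (⟪v₀, ℓ⟫ + β₀)) S := hg.sub (by fun_prop)
  have hT : IsCompact T := by
    refine hS.of_isClosed_subset ?_ (sep_subset S _)
    convert hcont.preimage_isClosed_of_isClosed hS.isClosed (isClosed_singleton (x := 0))
      using 1
    ext ℓ
    simp [T, sub_eq_zero]
  by_contra hxT
  obtain ⟨f, u, hfT, hux⟩ := geometric_hahn_banach_closed_point (convex_convexHull ℝ T)
    (isCompact_convexHull hT).isClosed hxT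
  obtain ⟨ε, hε, hεle⟩ := hS.exists_pos_mul_le (ψ := fun ℓ => f ℓ - u) hcont
    (f.continuous.sub continuous_const) (fun ℓ hℓ => sub_nonneg.2 (hlg ℓ hℓ)) fun ℓ hℓ hfℓ => by
      refine sub_pos.2 ((hlg ℓ hℓ).lt_of_ne fun hgℓ => ?_)
      linarith [hfT ℓ (subset_convexHull ℝ T ⟨hℓ, hgℓ.symm⟩)]
  set w := (InnerProductSpace.toDual ℝ E).symm f
  have hw : ∀ y, ⟪w, y⟫ = f y := fun y => InnerProductSpace.toDual_symm_apply
  have hadm : ∀ ℓ ∈ S, ⟪v₀ + ε • w, ℓ⟫ + (β₀ - ε * u) ≤ g ℓ := fun ℓ hℓ => by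
    rw [inner_add_left, real_inner_smul_left, hw]
    linarith [hεle ℓ hℓ]
  have := le_convexEnvelope (hS.bddAbove_image hg) hx hadm
  rw [hxl, inner_add_left, real_inner_smul_left, hw] at this
  nlinarith

end ConvexEnvelope

theorem contactSet_convexEnvelope_eq_convexHull {E : Type*} [NormedAddCommGroup E]
    [InnerProductSpace ℝ E] [FiniteDimensional ℝ E] {S : Set E} {g : E → ℝ} {v₀ : E} {β₀ : ℝ}
    (hS : IsCompact S) (hg : ContinuousOn g S)
    (hl : ∀ x ∈ convexHull ℝ S, ⟪v₀, x⟫ + β₀ ≤ convexEnvelope S g x) :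
    {x ∈ convexHull ℝ S | convexEnvelope S g x = ⟪v₀, x⟫ + β₀} =
      convexHull ℝ {ℓ ∈ S | g ℓ = ⟪v₀, ℓ⟫ + β₀} := by
  have hgB := hS.bddBelow_image hg
  have hlg : ∀ ℓ ∈ S, ⟪v₀, ℓ⟫ + β₀ ≤ g ℓ := fun ℓ hℓ =>
    (hl ℓ (subset_convexHull ℝ S hℓ)).trans (convexEnvelope_le_self hgB hℓ)
  exact Subset.antisymm (fun x ⟨hx, hxl⟩ => mem_convexHull_contactSet hS hg hlg hx hxl)
    (convexHull_subset_contactSet (hS.bddAbove_image hg) hgB hl)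

/-- Let `g` be a continuous function on the unit sphere of `ℝ^d` and let
`h_g` be its convex envelope on the closed unit ball, i.e. the pointwise supremum of all
affine functions `a(x) = ⟨v, x⟩ + β` with `a ≤ g` on the sphere.  If `l(x) = ⟨v₀, x⟩ + β₀`
is an affine function with `l ≤ h_g` on the closed ball, then the contact set
`{x ∈ B̄ : h_g x = l x}` equals the convex hull of `{ℓ ∈ S^{d−1} : g ℓ = l ℓ}`. -/
theorem stmt2 (d : ℕ) (hd : 1 ≤ d) (g : EuclideanSpace ℝ (Fin d) → ℝ)
    (hgcont : ContinuousOn g (Metric.sphere (0 : EuclideanSpace ℝ (Fin d)) 1))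
    (h_g : EuclideanSpace ℝ (Fin d) → ℝ)
    (henv : ∀ x ∈ Metric.closedBall (0 : EuclideanSpace ℝ (Fin d)) 1,
        h_g x = sSup {y : ℝ | ∃ v : EuclideanSpace ℝ (Fin d), ∃ β : ℝ,
          (∀ ℓ ∈ Metric.sphere (0 : EuclideanSpace ℝ (Fin d)) 1, ⟪v, ℓ⟫ + β ≤ g ℓ) ∧
          y = ⟪v, x⟫ + β})
    (v₀ : EuclideanSpace ℝ (Fin d)) (β₀ : ℝ)
    (hl : ∀ x ∈ Metric.closedBall (0 : EuclideanSpace ℝ (Fin d)) 1, ⟪v₀, x⟫ + β₀ ≤ h_g x) :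
    {x ∈ Metric.closedBall (0 : EuclideanSpace ℝ (Fin d)) 1 | h_g x = ⟪v₀, x⟫ + β₀}
      = convexHull ℝ
          {ℓ ∈ Metric.sphere (0 : EuclideanSpace ℝ (Fin d)) 1 | g ℓ = ⟪v₀, ℓ⟫ + β₀} := by
  have : NeZero d := ⟨by omega⟩
  have hball : convexHull ℝ (Metric.sphere (0 : EuclideanSpace ℝ (Fin d)) 1) =
      Metric.closedBall 0 1 := convexHull_sphere_eq_closedBall 0 zero_le_one
  have henv' : ∀ x ∈ convexHull ℝ (Metric.sphere 0 1),
      h_g x = convexEnvelope (Metric.sphere 0 1) g x := fun x hx => henv x (hball ▸ hx)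
  rw [← hball, ← contactSet_convexEnvelope_eq_convexHull (isCompact_sphere 0 1) hgcont
    fun x hx => (henv' x hx).symm ▸ hl x (hball ▸ hx)]
  exact Set.ext fun x => and_congr_right fun hx => by rw [henv' x hx]
end

section
/- (Multidimensional Alexandrov–Heinz theorem.) Let d ≥ 2 and let k be a natural number with 1 ≤ k and 2k ≤ d. Let B be the open unit ball of ℝ^d and let h : closure(B) → ℝ be continuous and convex. Assume there is c₀ > 0 such that L(∂h(ω)) ≥ c₀·L(ω) for every Borel set ω ⊆ B, the subdifferentials being taken with respect to B. Let 0 < r < 1 and suppose that h(x) = 0 for every x ∈ ℝ^d with ‖x‖ = r and x_i = 0 for all i ∈ {d−k+1, …, d} (that is, h vanishes on the boundary sphere of the (d−k)-dimensional ball of radius r centered at the origin in the coordinate subspace where the last k coordinates vanish). Then h(0) < 0. In particular, a convex function whose Monge–Ampère measure is bounded below by a positive multiple of Lebesgue measure cannot be affine on any (d−k)-dimensional ball with k ≤ d/2. -/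
/-!
Convexity and `h = 0` on the flat sphere give `h 0 ≤ 0`; suppose `h 0 = 0`. Subtracting a
supporting linear function at `0` yields `v ≥ 0` on `B` with the same Monge–Ampère bound, vanishing
on the flat disk `D` of radius `r` (the coordinates `i < d - k` are flat, the other `k` normal).
Testing a subgradient `p ∈ ∂v(x)` against points of `D` shows that on the box of flat half-width
`a` and normal half-width `ε` the flat coordinates of `p` are `O(ε)`. The shell between the boxes
of normal half-widths `ε` and `ε / 2` has volume `≍ ε ^ k`, so the Monge–Ampère bound forces the
normal coordinates of its subgradients to fill a set of measure `≳ ε ^ (k - (d - k)) ≥ 1` in `ℝ^k`.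
As `ε → 0`, however, they accumulate on the frontier of the closed convex set `Z` of normal slopes
`q` with `⟪q, y_⊥⟫ ≤ v y` on `B`: limits lie in `Z` because they are subgradients at flat points
with vanishing flat part, and not in its interior because `v x ≤ ⟪p_⊥, x_⊥⟫` with `x_⊥ ≠ 0` on the
shell. The frontier of a convex set is Lebesgue-null, a contradiction.
-/

open scoped RealInnerProductSpace
open MeasureTheory

/-- The subdifferential of `f : O → ℝ` at `x`:
`∂f(x) = {p : f y ≥ f x + ⟨p, y − x⟩ for all y ∈ O}`. -/
def subdiff {d : ℕ} (O : Set (EuclideanSpace ℝ (Fin d)))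
    (f : EuclideanSpace ℝ (Fin d) → ℝ) (x : EuclideanSpace ℝ (Fin d)) :
    Set (EuclideanSpace ℝ (Fin d)) :=
  {p | ∀ y ∈ O, f x + ⟪p, y - x⟫ ≤ f y}

/-- `∂f(ω) = ⋃_{x ∈ ω} ∂f(x)`; its Lebesgue measure is the Monge–Ampère measure
`MA(f)(ω)`. -/
def subdiffSet {d : ℕ} (O : Set (EuclideanSpace ℝ (Fin d)))
    (f : EuclideanSpace ℝ (Fin d) → ℝ) (ω : Set (EuclideanSpace ℝ (Fin d))) :
    Set (EuclideanSpace ℝ (Fin d)) :=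
  ⋃ x ∈ ω, subdiff O f x

open Metric Filter Topology

theorem ConvexOn.exists_subgradient {E : Type*} [NormedAddCommGroup E] [NormedSpace ℝ E]
    {s : Set E} {f : E → ℝ} (hf : ConvexOn ℝ s f) (hfc : ContinuousOn f s) (hs : IsOpen s)
    {x : E} (hx : x ∈ s) : ∃ L : StrongDual ℝ E, ∀ y ∈ s, f x + L (y - x) ≤ f y := by
  set C := {z : E × ℝ | z.1 ∈ s ∧ f z.1 < z.2}
  have hC : IsOpen C := by
    have := ((hfc.comp continuousOn_fst fun _ hz => hz.1).sub
      continuousOn_snd).isOpen_inter_preimage (hs.prod isOpen_univ) (isOpen_Iio (a := (0 : ℝ)))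
    convert this using 1
    ext z
    simp [C, sub_neg]
  obtain ⟨Λ, hΛ⟩ := geometric_hahn_banach_open_point hf.convex_strict_epigraph hC
    (fun h => lt_irrefl _ h.2 : (x, f x) ∉ C)
  have hΛ_apply (y : E) (t : ℝ) : Λ (y, t) = Λ (y, 0) + t * Λ (0, 1) := by
    rw [← smul_eq_mul, ← map_smul, ← map_add]
    simp
  have hβ : Λ (0, 1) < 0 := by
    have := hΛ (x, f x + 1) ⟨hx, lt_add_one _⟩
    rw [hΛ_apply, hΛ_apply x (f x)] at this
    linarith
  refine ⟨(-Λ (0, 1))⁻¹ • Λ.comp (ContinuousLinearMap.inl ℝ E ℝ), fun y hy => ?_⟩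
  have hlim : Λ (y, f y) ≤ Λ (x, f x) := by
    refine le_of_tendsto (((Λ.continuous.comp (Continuous.prodMk_right y)).tendsto (f y)).mono_left
      (nhdsWithin_le_nhds (s := Set.Ioi (f y)))) ?_
    exact eventually_nhdsWithin_of_forall fun t ht => (hΛ (y, t) ⟨hy, ht⟩).le
  rw [hΛ_apply, hΛ_apply x] at hlim
  have hsub : Λ (y - x, 0) = Λ (y, 0) - Λ (x, 0) := by
    rw [← map_sub, Prod.mk_sub_mk, sub_zero]
  simp only [smul_apply, ContinuousLinearMap.comp_apply, ContinuousLinearMap.inl_apply,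
    smul_eq_mul, hsub]
  rw [inv_mul_eq_div, ← le_sub_iff_add_le', div_le_iff₀ (by linarith)]
  linarith

theorem ConvexOn.subdiff_nonempty {d : ℕ} {O : Set (EuclideanSpace ℝ (Fin d))}
    {f : EuclideanSpace ℝ (Fin d) → ℝ} (hf : ConvexOn ℝ O f) (hfc : ContinuousOn f O)
    (hO : IsOpen O) {x : EuclideanSpace ℝ (Fin d)} (hx : x ∈ O) : (subdiff O f x).Nonempty := by
  obtain ⟨L, hL⟩ := hf.exists_subgradient hfc hO hx
  exact ⟨(InnerProductSpace.toDual ℝ _).symm L, fun y hy => by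
    simpa [InnerProductSpace.toDual_symm_apply] using hL y hy⟩

theorem ConvexOn.apply_smul_le_max {E : Type*} [AddCommGroup E] [Module ℝ E] {s : Set E}
    {f : E → ℝ} (hf : ConvexOn ℝ s f) {u : E} (hu : u ∈ s) (hnu : -u ∈ s) {t : ℝ}
    (ht : |t| ≤ 1) : f (t • u) ≤ max (f (-u)) (f u) := by
  obtain ⟨ht₁, ht₂⟩ := abs_le.1 ht
  exact hf.le_on_segment hnu hu
    ⟨(1 - t) / 2, (1 + t) / 2, by linarith, by linarith, by ring, by module⟩

namespace AlexandrovHeinz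

section Coordinates

variable {ι : Type*} (P : ι → Prop)

def normalCoords : EuclideanSpace ℝ ι →L[ℝ] EuclideanSpace ℝ {i // ¬P i} where
  toFun x := WithLp.toLp 2 fun j => x j
  map_add' x y := by ext; simp
  map_smul' c x := by ext; simp

@[simp]
lemma normalCoords_apply (x : EuclideanSpace ℝ ι) (j : {i // ¬P i}) : normalCoords P x j = x j :=
  rfl

variable {P} in
lemma normalCoords_eq_zero_iff {x : EuclideanSpace ℝ ι} :
    normalCoords P x = 0 ↔ ∀ i, ¬P i → x i = 0 :=
  ⟨fun h i hi => by simpa using congr($h ⟨i, hi⟩), fun h => by ext j; exact h j j.2⟩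

variable {P} in
lemma exists_smul_eq_of_normalCoords_eq_zero [Fintype ι] {i : ι} (hi : P i) {r : ℝ}
    {y : EuclideanSpace ℝ ι} (hy : normalCoords P y = 0) (hyr : ‖y‖ ≤ r) :
    ∃ u, normalCoords P u = 0 ∧ ‖u‖ = r ∧ ∃ t : ℝ, |t| ≤ 1 ∧ t • u = y := by
  classical
  have hr : 0 ≤ r := (norm_nonneg y).trans hyr
  rcases eq_or_ne y 0 with rfl | hy0
  · refine ⟨EuclideanSpace.single i r, normalCoords_eq_zero_iff.2 fun j hj => ?_, by simp [hr],
      0, by simp, zero_smul _ _⟩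
    simpa using fun h : j = i => absurd (h ▸ hi) hj
  have hyn : 0 < ‖y‖ := norm_pos_iff.2 hy0
  refine ⟨(r / ‖y‖) • y, by simp [hy], ?_, ‖y‖ / r, ?_, ?_⟩
  · rw [norm_smul, Real.norm_of_nonneg (by positivity), div_mul_cancel₀ _ hyn.ne']
  · rw [abs_of_nonneg (by positivity)]
    exact div_le_one_of_le₀ hyr hr
  · rw [smul_smul, div_mul_div_cancel₀ (hyn.trans_le hyr).ne', div_self hyn.ne', one_smul]

variable {P} in
lemma apply_le_zero_of_normalCoords_eq_zero [Fintype ι] {f : EuclideanSpace ℝ ι → ℝ} {r : ℝ}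
    (hf : ConvexOn ℝ (ball 0 1) f) (hr1 : r < 1) {i : ι} (hi : P i)
    (hsphere : ∀ x, normalCoords P x = 0 → ‖x‖ = r → f x = 0) {y : EuclideanSpace ℝ ι}
    (hy : normalCoords P y = 0) (hyr : ‖y‖ ≤ r) : f y ≤ 0 := by
  obtain ⟨u, hu, hur, t, ht, rfl⟩ := exists_smul_eq_of_normalCoords_eq_zero hi hy hyr
  have huB : u ∈ ball (0 : EuclideanSpace ℝ ι) 1 := mem_ball_zero_iff.2 (hur ▸ hr1)
  simpa [hsphere u hu hur, hsphere (-u) (by simp [hu]) (by simp [hur])] using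
    hf.apply_smul_le_max huB (by simpa using huB) ht

variable {P} in
lemma apply_eq_inner_of_normalCoords_eq_zero [Fintype ι] {f : EuclideanSpace ℝ ι → ℝ}
    {p₀ : EuclideanSpace ℝ ι} {r : ℝ} (hf : ConvexOn ℝ (ball 0 1) f) (hr1 : r < 1) {i : ι}
    (hi : P i) (hsphere : ∀ x, normalCoords P x = 0 → ‖x‖ = r → f x = 0)
    (hp₀ : ∀ y ∈ ball 0 1, ⟪p₀, y⟫ ≤ f y) {y : EuclideanSpace ℝ ι}
    (hy : normalCoords P y = 0) (hyr : ‖y‖ ≤ r) : f y = ⟪p₀, y⟫ := by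
  have h1 := apply_le_zero_of_normalCoords_eq_zero hf hr1 hi hsphere hy hyr
  have h2 := apply_le_zero_of_normalCoords_eq_zero hf hr1 hi hsphere (y := -y) (by simp [hy])
    (by simpa)
  have h3 := hp₀ y (mem_ball_zero_iff.2 (hyr.trans_lt hr1))
  have h4 := hp₀ (-y) (mem_ball_zero_iff.2 ((norm_neg y).trans_lt (hyr.trans_lt hr1)))
  rw [inner_neg_right] at h4
  linarith

lemma abs_apply_le_of_tendsto {x : ℕ → EuclideanSpace ℝ ι} {x' : EuclideanSpace ℝ ι}
    (hx : Tendsto x atTop (𝓝 x')) {b : ℕ → ℝ} {b' : ℝ} (hb : Tendsto b atTop (𝓝 b')) {i : ι}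
    (h : ∀ n, |x n i| ≤ b n) : |x' i| ≤ b' :=
  le_of_tendsto_of_tendsto' (((PiLp.continuous_apply 2 _ i).tendsto x').comp hx).abs hb h

variable [DecidablePred P]

def flatPart (x : EuclideanSpace ℝ ι) : EuclideanSpace ℝ ι :=
  WithLp.toLp 2 fun i => if P i then x i else 0

lemma flatPart_apply (x : EuclideanSpace ℝ ι) (i : ι) :
    flatPart P x i = if P i then x i else 0 :=
  rfl

@[simp]
lemma normalCoords_flatPart (x : EuclideanSpace ℝ ι) : normalCoords P (flatPart P x) = 0 := by
  ext j
  simp [flatPart_apply, j.2]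

def box (a ε : ℝ) : Set (EuclideanSpace ℝ ι) :=
  {x | ∀ i, |x i| ≤ if P i then a else ε}

variable {P}

lemma normalCoords_ne_zero_of_mem_box_diff {a ε : ℝ} (hε : 0 < ε) {x : EuclideanSpace ℝ ι}
    (hx : x ∈ box P a ε \ box P a (ε / 2)) : normalCoords P x ≠ 0 := by
  intro h0
  refine hx.2 fun i => ?_
  by_cases hi : P i
  · simpa [hi] using hx.1 i
  · simp [hi, normalCoords_eq_zero_iff.1 h0 i hi, hε.le, div_nonneg]

variable [Fintype ι]

lemma inner_eq_inner_normalCoords {p : EuclideanSpace ℝ ι} (hp : ∀ i, P i → p i = 0)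
    (y : EuclideanSpace ℝ ι) : ⟪p, y⟫ = ⟪normalCoords P p, normalCoords P y⟫ := by
  simp only [PiLp.inner_apply, normalCoords_apply,
    ← Fintype.sum_subtype_add_sum_subtype P (fun i => inner ℝ (p i) (y i))]
  simp [hp _ (Subtype.prop _)]

lemma inner_sub_flatPart (p x : EuclideanSpace ℝ ι) :
    ⟪p, x - flatPart P x⟫ = ⟪normalCoords P p, normalCoords P x⟫ := by
  rw [real_inner_comm, inner_eq_inner_normalCoords (P := P), map_sub, normalCoords_flatPart,
    sub_zero, real_inner_comm]
  intro i hi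
  simp [flatPart_apply, hi]

lemma norm_normalCoords_le (x : EuclideanSpace ℝ ι) : ‖normalCoords P x‖ ≤ ‖x‖ := by
  rw [← sq_le_sq₀ (norm_nonneg _) (norm_nonneg _), EuclideanSpace.real_norm_sq_eq,
    EuclideanSpace.real_norm_sq_eq, ← Fintype.sum_subtype_add_sum_subtype P (fun i => x i ^ 2)]
  simp only [normalCoords_apply]
  exact le_add_of_nonneg_left (Finset.sum_nonneg fun i _ => sq_nonneg _)

lemma norm_le_sqrt_card_mul {x : EuclideanSpace ℝ ι} {c : ℝ} (hc : 0 ≤ c)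
    (hx : ∀ i, |x i| ≤ c) : ‖x‖ ≤ √(Fintype.card ι) * c := by
  rw [EuclideanSpace.norm_eq, ← Real.sqrt_sq hc, ← Real.sqrt_mul (Nat.cast_nonneg _)]
  gcongr
  calc ∑ i, ‖x i‖ ^ 2 ≤ ∑ _i : ι, c ^ 2 := by
        gcongr with i
        exact (Real.norm_eq_abs _).trans_le (hx i)
    _ = _ := by simp

lemma norm_le_of_mem_box {a ε : ℝ} (hε : 0 ≤ ε) (hεa : ε ≤ a) {x : EuclideanSpace ℝ ι}
    (hx : x ∈ box P a ε) : ‖x‖ ≤ √(Fintype.card ι) * a :=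
  norm_le_sqrt_card_mul (hε.trans hεa) fun i => (hx i).trans (by split_ifs <;> linarith)

lemma norm_flatPart_le_of_mem_box {a ε : ℝ} (ha : 0 ≤ a) {x : EuclideanSpace ℝ ι}
    (hx : x ∈ box P a ε) : ‖flatPart P x‖ ≤ √(Fintype.card ι) * a := by
  refine norm_le_sqrt_card_mul ha fun i => ?_
  have := hx i
  rw [flatPart_apply]
  split_ifs at this ⊢ <;> simp_all

lemma norm_normalCoords_le_of_mem_box {a ε : ℝ} (hε : 0 ≤ ε) {x : EuclideanSpace ℝ ι}
    (hx : x ∈ box P a ε) : ‖normalCoords P x‖ ≤ √(Fintype.card ι) * ε :=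
  calc ‖normalCoords P x‖ ≤ √(Fintype.card {i // ¬P i}) * ε :=
        norm_le_sqrt_card_mul hε fun j => by simpa [j.2] using hx j
    _ ≤ √(Fintype.card ι) * ε := by
        gcongr
        exact Fintype.card_subtype_le _

lemma volume_setOf_abs_le (g : ι → ℝ) :
    volume {x : EuclideanSpace ℝ ι | ∀ i, |x i| ≤ g i} = ∏ i, ENNReal.ofReal (2 * g i) := by
  have : {x : EuclideanSpace ℝ ι | ∀ i, |x i| ≤ g i}
      = (MeasurableEquiv.toLp 2 (ι → ℝ)).symm ⁻¹' Set.univ.pi fun i => Set.Icc (-g i) (g i) := by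
    ext x
    simp only [Set.mem_preimage, Set.mem_univ_pi, Set.mem_Icc, ← abs_le]
    rfl
  rw [this, (EuclideanSpace.volume_preserving_symm_measurableEquiv_toLp ι).measure_preimage_equiv,
    volume_pi_pi]
  simp only [Real.volume_Icc, sub_neg_eq_add, two_mul]

variable (P)

lemma volume_setOf_abs_le_and_normalCoords_mem (b : ℝ) (Q : Set (EuclideanSpace ℝ {i // ¬P i})) :
    volume {x : EuclideanSpace ℝ ι | (∀ i, P i → |x i| ≤ b) ∧ normalCoords P x ∈ Q}
      = ENNReal.ofReal (2 * b) ^ Fintype.card {i // P i} * volume Q := by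
  let e := (MeasurableEquiv.toLp 2 (ι → ℝ)).symm.trans
    ((MeasurableEquiv.piEquivPiSubtypeProd (fun _ => ℝ) P).trans
      (MeasurableEquiv.prodCongr (MeasurableEquiv.refl _) (MeasurableEquiv.toLp 2 _)))
  have he : MeasurePreserving e :=
    (EuclideanSpace.volume_preserving_symm_measurableEquiv_toLp ι).trans
      ((volume_preserving_piEquivPiSubtypeProd _ P).trans
        ((MeasurePreserving.id _).prod (PiLp.volume_preserving_toLp _)))
  have : {x : EuclideanSpace ℝ ι | (∀ i, P i → |x i| ≤ b) ∧ normalCoords P x ∈ Q}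
      = e ⁻¹' ((Set.univ.pi fun _ => Set.Icc (-b) b) ×ˢ Q) := by
    ext x
    simp only [Set.mem_preimage, Set.mem_prod, Set.mem_univ_pi, Set.mem_Icc, ← abs_le,
      Subtype.forall]
    rfl
  rw [this, he.measure_preimage_equiv, Measure.volume_eq_prod, Measure.prod_prod, volume_pi_pi]
  simp [Real.volume_Icc, two_mul]

lemma measurableSet_box (a ε : ℝ) : MeasurableSet (box P a ε) := by
  refine IsClosed.measurableSet ?_
  simp only [box, Set.ofPred_forall]
  exact isClosed_iInter fun i => isClosed_le (by fun_prop) continuous_const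

lemma volume_box (a ε : ℝ) :
    volume (box P a ε) = ENNReal.ofReal (2 * a) ^ Fintype.card {i // P i}
      * ENNReal.ofReal (2 * ε) ^ Fintype.card {i // ¬P i} := by
  have hP (j : {i // P i}) :
      ENNReal.ofReal (2 * if P j then a else ε) = ENNReal.ofReal (2 * a) := by rw [if_pos j.2]
  have hnP (j : {i // ¬P i}) :
      ENNReal.ofReal (2 * if P j then a else ε) = ENNReal.ofReal (2 * ε) := by rw [if_neg j.2]
  rw [box, volume_setOf_abs_le, ← Fintype.prod_subtype_mul_prod_subtype P]
  simp only [hP, hnP, Finset.prod_const, Finset.card_univ]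

lemma volume_box_diff_box {a ε : ℝ} (ha : 0 ≤ a) (hε : 0 ≤ ε) :
    volume (box P a ε \ box P a (ε / 2)) = ENNReal.ofReal
      ((2 * a) ^ Fintype.card {i // P i} * (2 ^ Fintype.card {i // ¬P i} - 1)
        * ε ^ Fintype.card {i // ¬P i}) := by
  have hsub : box P a (ε / 2) ⊆ box P a ε :=
    fun x hx i => (hx i).trans (by split_ifs <;> linarith)
  rw [measure_sdiff hsub (measurableSet_box P a _).nullMeasurableSet
      (by simp only [volume_box]; finiteness),
    volume_box, volume_box, mul_div_cancel₀ _ two_ne_zero, ← ENNReal.ofReal_pow (by positivity),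
    ← ENNReal.ofReal_pow (by positivity), ← ENNReal.ofReal_pow (by positivity),
    ← ENNReal.ofReal_mul (by positivity), ← ENNReal.ofReal_mul (by positivity),
    ← ENNReal.ofReal_sub _ (by positivity)]
  congr 1
  rw [mul_pow]
  ring

def minorantSlopes (v : EuclideanSpace ℝ ι → ℝ) : Set (EuclideanSpace ℝ {i // ¬P i}) :=
  {q | ∀ y ∈ ball (0 : EuclideanSpace ℝ ι) 1, ⟪q, normalCoords P y⟫ ≤ v y}

lemma isClosed_minorantSlopes (v : EuclideanSpace ℝ ι → ℝ) : IsClosed (minorantSlopes P v) := by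
  simp only [minorantSlopes, Set.ofPred_forall]
  exact isClosed_iInter fun y => isClosed_iInter fun _ => isClosed_le (by fun_prop) continuous_const

lemma convex_minorantSlopes (v : EuclideanSpace ℝ ι → ℝ) : Convex ℝ (minorantSlopes P v) := by
  simp only [minorantSlopes, Set.ofPred_forall]
  exact convex_iInter fun y => convex_iInter fun _ =>
    convex_halfSpace_le (innerₛₗ ℝ |>.flip (normalCoords P y)).isLinear _

variable {P}

lemma le_dist_of_ball_subset_minorantSlopes {v : EuclideanSpace ℝ ι → ℝ} {x : EuclideanSpace ℝ ι}
    {q q' : EuclideanSpace ℝ {i // ¬P i}} {δ : ℝ} (hx : x ∈ ball 0 1)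
    (hvx : v x ≤ ⟪q, normalCoords P x⟫) (hx0 : normalCoords P x ≠ 0) (hδ : 0 < δ)
    (hball : ball q' δ ⊆ minorantSlopes P v) : δ / 2 ≤ dist q q' := by
  set u := normalCoords P x
  have hu : 0 < ‖u‖ := norm_pos_iff.2 hx0
  have hmem : q' + (δ / (2 * ‖u‖)) • u ∈ minorantSlopes P v := hball <| by
    rw [mem_ball, dist_eq_norm, add_sub_cancel_left, norm_smul, Real.norm_of_nonneg (by positivity)]
    field_simp
    linarith
  have h1 := hmem x hx
  rw [inner_add_left, real_inner_smul_left, real_inner_self_eq_norm_sq,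
    show δ / (2 * ‖u‖) * ‖u‖ ^ 2 = δ / 2 * ‖u‖ by field_simp] at h1
  have h2 : ⟪q - q', u⟫ ≤ dist q q' * ‖u‖ := dist_eq_norm q q' ▸ real_inner_le_norm _ _
  rw [inner_sub_left] at h2
  exact le_of_mul_le_mul_right (by linarith) hu

end Coordinates

section Subdifferential

variable {d : ℕ} {P : Fin d → Prop} [DecidablePred P] {v : EuclideanSpace ℝ (Fin d) → ℝ}

def MongeAmpereBoundedBelow (f : EuclideanSpace ℝ (Fin d) → ℝ) (c₀ : ℝ) : Prop :=
  ∀ ω : Set (EuclideanSpace ℝ (Fin d)), MeasurableSet ω → ω ⊆ ball 0 1 →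
    ENNReal.ofReal c₀ * volume ω ≤ volume (subdiffSet (ball 0 1) f ω)

lemma subdiff_sub_inner (O : Set (EuclideanSpace ℝ (Fin d))) (f : EuclideanSpace ℝ (Fin d) → ℝ)
    (p₀ x : EuclideanSpace ℝ (Fin d)) :
    subdiff O (fun y => f y - ⟪p₀, y⟫) x = (· + p₀) ⁻¹' subdiff O f x := by
  ext p
  simp only [subdiff, Set.mem_preimage, Set.mem_ofPred_eq, inner_add_left, inner_sub_right]
  exact forall₂_congr fun y _ => by constructor <;> intro h <;> linarith

lemma MongeAmpereBoundedBelow.sub_inner {f : EuclideanSpace ℝ (Fin d) → ℝ} {c₀ : ℝ}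
    (hf : MongeAmpereBoundedBelow f c₀) (p₀ : EuclideanSpace ℝ (Fin d)) :
    MongeAmpereBoundedBelow (fun y => f y - ⟪p₀, y⟫) c₀ := by
  intro ω hω hωB
  rw [subdiffSet, funext (subdiff_sub_inner _ f p₀), ← Set.preimage_iUnion₂,
    measure_preimage_add_right]
  exact hf ω hω hωB

lemma mem_subdiff_of_tendsto {O : Set (EuclideanSpace ℝ (Fin d))}
    {x p : ℕ → EuclideanSpace ℝ (Fin d)} {x' p' : EuclideanSpace ℝ (Fin d)}
    (hv : ContinuousAt v x') (hxt : Tendsto x atTop (𝓝 x')) (hpt : Tendsto p atTop (𝓝 p'))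
    (hp : ∀ n, p n ∈ subdiff O v (x n)) : p' ∈ subdiff O v x' := fun y hy =>
  le_of_tendsto' ((hv.tendsto.comp hxt).add (hpt.inner (tendsto_const_nhds.sub hxt)))
    fun n => hp n y hy

lemma norm_le_of_mem_subdiff {M : ℝ} (hbound : ∀ y ∈ ball 0 1, v y ≤ M)
    {x p : EuclideanSpace ℝ (Fin d)} (hx : ‖x‖ ≤ 1 / 2) (hvx : 0 ≤ v x)
    (hp : p ∈ subdiff (ball 0 1) v x) : ‖p‖ ≤ 4 * M := by
  rcases eq_or_ne p 0 with rfl | hp0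
  · simpa using hvx.trans (hbound x (mem_ball_zero_iff.2 (by linarith)))
  have hpn : 0 < ‖p‖ := norm_pos_iff.2 hp0
  set w := (4 * ‖p‖)⁻¹ • p
  have hw : ‖w‖ = 1 / 4 := by
    rw [norm_smul, norm_inv, norm_mul, Real.norm_of_nonneg (norm_nonneg _)]
    field_simp
    norm_num
  have hpw : ⟪p, w⟫ = ‖p‖ / 4 := by
    rw [real_inner_smul_right, real_inner_self_eq_norm_sq]
    field_simp
  have hy : x + w ∈ ball (0 : EuclideanSpace ℝ (Fin d)) 1 :=
    mem_ball_zero_iff.2 ((norm_add_le x w).trans_lt (by linarith))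
  have := hp _ hy
  rw [add_sub_cancel_left, hpw] at this
  linarith [hbound _ hy]

lemma add_inner_sub_flatPart_le {r : ℝ} (hr1 : r < 1)
    (hflat : ∀ y, normalCoords P y = 0 → ‖y‖ ≤ r → v y = 0) {x p y : EuclideanSpace ℝ (Fin d)}
    (hp : p ∈ subdiff (ball 0 1) v x) (hy : normalCoords P y = 0) (hyr : ‖y‖ ≤ r) :
    v x + ⟪p, y - flatPart P x⟫ ≤ ⟪normalCoords P p, normalCoords P x⟫ := by
  have := hp y (mem_ball_zero_iff.2 (hyr.trans_lt hr1))
  rw [hflat y hy hyr, show y - x = (y - flatPart P x) - (x - flatPart P x) by abel,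
    inner_sub_right, inner_sub_flatPart] at this
  linarith

lemma le_inner_normalCoords_of_mem_subdiff {r : ℝ} (hr1 : r < 1)
    (hflat : ∀ y, normalCoords P y = 0 → ‖y‖ ≤ r → v y = 0) {x p : EuclideanSpace ℝ (Fin d)}
    (hp : p ∈ subdiff (ball 0 1) v x) (hx : ‖flatPart P x‖ ≤ r) :
    v x ≤ ⟪normalCoords P p, normalCoords P x⟫ := by
  simpa using add_inner_sub_flatPart_le hr1 hflat hp (normalCoords_flatPart P x) hx

lemma abs_apply_le_of_mem_subdiff {r : ℝ} (hr1 : r < 1)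
    (hflat : ∀ y, normalCoords P y = 0 → ‖y‖ ≤ r → v y = 0) {x p : EuclideanSpace ℝ (Fin d)}
    (hp : p ∈ subdiff (ball 0 1) v x) (hx : ‖flatPart P x‖ ≤ r / 2) (hvx : 0 ≤ v x)
    {i : Fin d} (hi : P i) : r / 2 * |p i| ≤ ⟪normalCoords P p, normalCoords P x⟫ := by
  have hr : 0 ≤ r / 2 := (norm_nonneg _).trans hx
  have key (t : ℝ) (ht : |t| ≤ r / 2) : t * p i ≤ ⟪normalCoords P p, normalCoords P x⟫ := by
    set y := flatPart P x + EuclideanSpace.single i t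
    have hy : normalCoords P y = 0 := by
      ext j
      simp only [y, map_add, normalCoords_flatPart, zero_add]
      simpa using fun h : (j : Fin d) = i => absurd (h ▸ hi) j.2
    have hyr : ‖y‖ ≤ r := (norm_add_le _ _).trans <| by
      simp only [PiLp.norm_single, Real.norm_eq_abs]
      linarith
    have := add_inner_sub_flatPart_le hr1 hflat hp hy hyr
    rw [add_sub_cancel_left, EuclideanSpace.inner_single_right, conj_trivial] at this
    linarith
  rcases abs_cases (p i) with ⟨h, -⟩ | ⟨h, -⟩ <;> rw [h]
  · exact key _ (abs_of_nonneg hr).le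
  · simpa using key (-(r / 2)) (by rw [abs_neg, abs_of_nonneg hr])

lemma abs_apply_le_of_mem_box {r M a ε : ℝ} (hr0 : 0 < r) (hr1 : r < 1)
    (hflat : ∀ y, normalCoords P y = 0 → ‖y‖ ≤ r → v y = 0) (hv0 : ∀ y ∈ ball 0 1, 0 ≤ v y)
    (hbound : ∀ y ∈ ball 0 1, v y ≤ M) (har : √d * a ≤ r / 4) (hε : 0 ≤ ε) (hεa : ε ≤ a)
    {x p : EuclideanSpace ℝ (Fin d)} (hx : x ∈ box P a ε) (hp : p ∈ subdiff (ball 0 1) v x)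
    {i : Fin d} (hi : P i) : |p i| ≤ 8 * M * √d / r * ε := by
  have hxn : ‖x‖ ≤ r / 4 := (norm_le_of_mem_box hε hεa hx).trans (by simpa using har)
  have hvx : 0 ≤ v x := hv0 x (mem_ball_zero_iff.2 (by linarith))
  have hpn : ‖p‖ ≤ 4 * M := norm_le_of_mem_subdiff hbound (by linarith) hvx hp
  have hflatx : ‖flatPart P x‖ ≤ r / 2 :=
    (norm_flatPart_le_of_mem_box (hε.trans hεa) hx).trans
      (by simp only [Fintype.card_fin]; linarith)
  have h1 := abs_apply_le_of_mem_subdiff hr1 hflat hp hflatx hvx hi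
  have h2 : ⟪normalCoords P p, normalCoords P x⟫ ≤ 4 * M * (√d * ε) :=
    (real_inner_le_norm _ _).trans (mul_le_mul ((norm_normalCoords_le p).trans hpn)
      (by simpa using norm_normalCoords_le_of_mem_box hε hx) (norm_nonneg _)
      ((norm_nonneg p).trans hpn))
  rw [div_mul_eq_mul_div, le_div_iff₀ hr0]
  linarith

lemma normalCoords_mem_minorantSlopes {x p : EuclideanSpace ℝ (Fin d)}
    (hp : p ∈ subdiff (ball 0 1) v x) (hx : normalCoords P x = 0) (hvx : v x = 0)
    (hpP : ∀ i, P i → p i = 0) : normalCoords P p ∈ minorantSlopes P v := fun y hy => by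
  simpa [hvx, inner_eq_inner_normalCoords hpP, hx] using hp y hy

lemma normalCoords_mem_frontier_of_tendsto {r M a : ℝ} (hr0 : 0 < r) (hr1 : r < 1)
    (hflat : ∀ y, normalCoords P y = 0 → ‖y‖ ≤ r → v y = 0) (hvc : ContinuousOn v (ball 0 1))
    (hv0 : ∀ y ∈ ball 0 1, 0 ≤ v y) (hbound : ∀ y ∈ ball 0 1, v y ≤ M) (har : √d * a ≤ r / 4)
    {ε : ℕ → ℝ} (hε0 : ∀ n, 0 < ε n) (hεa : ∀ n, ε n ≤ a) (hε : Tendsto ε atTop (𝓝 0))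
    {x p : ℕ → EuclideanSpace ℝ (Fin d)} (hx : ∀ n, x n ∈ box P a (ε n) \ box P a (ε n / 2))
    (hp : ∀ n, p n ∈ subdiff (ball 0 1) v (x n)) {x' p' : EuclideanSpace ℝ (Fin d)}
    (hxt : Tendsto x atTop (𝓝 x')) (hpt : Tendsto p atTop (𝓝 p')) :
    normalCoords P p' ∈ frontier (minorantSlopes P v) := by
  have hxn (n : ℕ) : ‖x n‖ ≤ r / 4 :=
    (norm_le_of_mem_box (hε0 n).le (hεa n) (hx n).1).trans (by simpa using har)
  have hflatx (n : ℕ) : ‖flatPart P (x n)‖ ≤ r :=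
    (norm_flatPart_le_of_mem_box ((hε0 n).le.trans (hεa n)) (hx n).1).trans
      (by simp only [Fintype.card_fin]; linarith)
  have hx'n : ‖x'‖ ≤ r / 4 := le_of_tendsto' hxt.norm hxn
  have hx'0 : normalCoords P x' = 0 := normalCoords_eq_zero_iff.2 fun i hi => abs_nonpos_iff.1 <|
    abs_apply_le_of_tendsto hxt hε fun n => by simpa [hi] using (hx n).1 i
  have hp'P (i : Fin d) (hi : P i) : p' i = 0 := abs_nonpos_iff.1 <| by
    simpa using abs_apply_le_of_tendsto hpt (hε.const_mul (8 * M * √d / r)) fun n =>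
      abs_apply_le_of_mem_box hr0 hr1 hflat hv0 hbound har (hε0 n).le (hεa n) (hx n).1 (hp n) hi
  have hp' : p' ∈ subdiff (ball 0 1) v x' := mem_subdiff_of_tendsto
    (hvc.continuousAt (isOpen_ball.mem_nhds (mem_ball_zero_iff.2 (by linarith)))) hxt hpt hp
  rw [(isClosed_minorantSlopes P v).frontier_eq]
  refine ⟨normalCoords_mem_minorantSlopes hp' hx'0 (hflat x' hx'0 (by linarith)) hp'P,
    fun hint => ?_⟩
  obtain ⟨δ, hδ, hball⟩ := isOpen_iff.1 isOpen_interior _ hint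
  have hq := ((normalCoords P).continuous.tendsto _).comp hpt
  obtain ⟨n, hn⟩ :=
    ((tendsto_iff_dist_tendsto_zero.1 hq).eventually (gt_mem_nhds (half_pos hδ))).exists
  exact hn.not_ge <| le_dist_of_ball_subset_minorantSlopes
    (mem_ball_zero_iff.2 (by linarith [hxn n]))
    (le_inner_normalCoords_of_mem_subdiff hr1 hflat (hp n) (hflatx n))
    (normalCoords_ne_zero_of_mem_box_diff (hε0 n) (hx n)) hδ (hball.trans interior_subset)

lemma exists_normalCoords_subdiff_mem_cthickening {r M a η : ℝ} (hr0 : 0 < r) (hr1 : r < 1)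
    (hflat : ∀ y, normalCoords P y = 0 → ‖y‖ ≤ r → v y = 0) (hvc : ContinuousOn v (ball 0 1))
    (hv0 : ∀ y ∈ ball 0 1, 0 ≤ v y) (hbound : ∀ y ∈ ball 0 1, v y ≤ M) (ha : 0 < a)
    (har : √d * a ≤ r / 4) (hη : 0 < η) :
    ∃ ε, 0 < ε ∧ ε ≤ a ∧ ∀ x ∈ box P a ε \ box P a (ε / 2), ∀ p ∈ subdiff (ball 0 1) v x,
      normalCoords P p ∈ cthickening η (frontier (minorantSlopes P v) ∩ closedBall 0 (4 * M)) := by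
  by_contra! hbad
  have hε0 (n : ℕ) : 0 < a / (n + 1) := by positivity
  have hεa (n : ℕ) : a / (n + 1) ≤ a := div_le_self ha.le (by linarith [n.cast_nonneg (α := ℝ)])
  have hε : Tendsto (fun n : ℕ => a / (n + 1)) atTop (𝓝 0) := by
    simpa [div_eq_mul_inv] using tendsto_one_div_add_atTop_nhds_zero_nat.const_mul a
  choose x hx p hp hout using fun n => hbad _ (hε0 n) (hεa n)
  have hxn (n : ℕ) : ‖x n‖ ≤ 1 / 2 := (norm_le_of_mem_box (hε0 n).le (hεa n) (hx n).1).trans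
    (by simp only [Fintype.card_fin]; linarith)
  have hpn (n : ℕ) : ‖p n‖ ≤ 4 * M := norm_le_of_mem_subdiff hbound (hxn n)
    (hv0 _ (mem_ball_zero_iff.2 (by linarith [hxn n]))) (hp n)
  obtain ⟨⟨x', p'⟩, hlim, φ, hφ, hxpt⟩ :=
    ((isCompact_closedBall (0 : EuclideanSpace ℝ (Fin d)) (1 / 2)).prod
      (isCompact_closedBall (0 : EuclideanSpace ℝ (Fin d)) (4 * M))).tendsto_subseq
      (x := fun n => (x n, p n))
      fun n => ⟨mem_closedBall_zero_iff.2 (hxn n), mem_closedBall_zero_iff.2 (hpn n)⟩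
  have hpt := (continuous_snd.tendsto _).comp hxpt
  have hF : normalCoords P p' ∈ frontier (minorantSlopes P v) ∩ closedBall 0 (4 * M) :=
    ⟨normalCoords_mem_frontier_of_tendsto hr0 hr1 hflat hvc hv0 hbound har (fun n => hε0 (φ n))
      (fun n => hεa (φ n)) (hε.comp hφ.tendsto_atTop) (fun n => hx (φ n)) (fun n => hp (φ n))
      ((continuous_fst.tendsto _).comp hxpt) hpt,
     mem_closedBall_zero_iff.2 ((norm_normalCoords_le p').trans
      (mem_closedBall_zero_iff.1 hlim.2))⟩
  have hq := ((normalCoords P).continuous.tendsto _).comp hpt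
  obtain ⟨n, hn⟩ := ((tendsto_iff_dist_tendsto_zero.1 hq).eventually (gt_mem_nhds hη)).exists
  exact hout (φ n) (mem_cthickening_of_dist_le _ _ _ _ hF hn.le)

lemma ofReal_le_volume_of_normalCoords_subdiff_mem {a ε C c₀ : ℝ} (hc₀ : 0 < c₀)
    (hMA : MongeAmpereBoundedBelow v c₀)
    (hkm : Fintype.card {i // ¬P i} ≤ Fintype.card {i // P i}) (hC : 0 < C) (ha : 0 ≤ a)
    (hε : 0 < ε) (hε1 : ε ≤ 1) (hball : box P a ε \ box P a (ε / 2) ⊆ ball 0 1)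
    {Q : Set (EuclideanSpace ℝ {i // ¬P i})}
    (hQ : ∀ x ∈ box P a ε \ box P a (ε / 2), ∀ p ∈ subdiff (ball 0 1) v x,
      (∀ i, P i → |p i| ≤ C * ε) ∧ normalCoords P p ∈ Q) :
    ENNReal.ofReal (c₀ * (2 * a) ^ Fintype.card {i // P i} * (2 ^ Fintype.card {i // ¬P i} - 1)
      / (2 * C) ^ Fintype.card {i // P i}) ≤ volume Q := by
  set m := Fintype.card {i // P i}
  set k := Fintype.card {i // ¬P i}
  have h2k : (0 : ℝ) ≤ 2 ^ k - 1 := sub_nonneg.2 (one_le_pow₀ one_le_two)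
  have hMA' : ENNReal.ofReal (c₀ * ((2 * a) ^ m * (2 ^ k - 1) * ε ^ k))
      ≤ ENNReal.ofReal ((2 * (C * ε)) ^ m) * volume Q :=
    calc ENNReal.ofReal (c₀ * ((2 * a) ^ m * (2 ^ k - 1) * ε ^ k))
        = ENNReal.ofReal c₀ * volume (box P a ε \ box P a (ε / 2)) := by
          rw [volume_box_diff_box P ha hε.le, ENNReal.ofReal_mul hc₀.le]
      _ ≤ volume (subdiffSet (ball 0 1) v (box P a ε \ box P a (ε / 2))) :=
          hMA _ ((measurableSet_box P a ε).diff (measurableSet_box P a _)) hball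
      _ ≤ volume {p | (∀ i, P i → |p i| ≤ C * ε) ∧ normalCoords P p ∈ Q} :=
          measure_mono (Set.iUnion₂_subset hQ)
      _ = _ := by
          rw [volume_setOf_abs_le_and_normalCoords_mem, ENNReal.ofReal_pow (by positivity)]
  -- `k ≤ m` is what makes this lower bound uniform in `ε`
  have hεkm : ε ^ m ≤ ε ^ k := pow_le_pow_of_le_one hε.le hε1 hkm
  refine le_trans ?_ (ENNReal.div_le_of_le_mul' hMA')
  rw [← ENNReal.ofReal_div_of_pos (by positivity)]
  refine ENNReal.ofReal_le_ofReal ?_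
  rw [div_le_div_iff₀ (by positivity) (by positivity)]
  calc c₀ * (2 * a) ^ m * (2 ^ k - 1) * (2 * (C * ε)) ^ m
      = c₀ * (2 * a) ^ m * (2 ^ k - 1) * (2 * C) ^ m * ε ^ m := by ring
    _ ≤ c₀ * (2 * a) ^ m * (2 ^ k - 1) * (2 * C) ^ m * ε ^ k := by gcongr
    _ = _ := by ring

theorem not_mongeAmpereBoundedBelow_of_normalCoords_eq_zero {r c₀ : ℝ}
    (hkm : Fintype.card {i // ¬P i} ≤ Fintype.card {i // P i})
    (hk : 1 ≤ Fintype.card {i // ¬P i}) (hvc : ContinuousOn v (ball 0 1))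
    (hv0 : ∀ y ∈ ball 0 1, 0 ≤ v y) (hbdd : BddAbove (v '' ball 0 1)) (hr0 : 0 < r)
    (hr1 : r < 1) (hflat : ∀ y, normalCoords P y = 0 → ‖y‖ ≤ r → v y = 0) (hc₀ : 0 < c₀) :
    ¬MongeAmpereBoundedBelow v c₀ := by
  intro hMA
  obtain ⟨M₀, hM₀⟩ := hbdd
  set M := max M₀ 1
  have hbound (y) (hy : y ∈ ball (0 : EuclideanSpace ℝ (Fin d)) 1) : v y ≤ M :=
    (hM₀ ⟨y, hy, rfl⟩).trans (le_max_left _ _)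
  have hd : 1 ≤ √d := Real.one_le_sqrt.2 <| by
    exact_mod_cast hk.trans ((Fintype.card_subtype_le _).trans_eq (Fintype.card_fin d))
  set a := r / (4 * √d)
  have ha : 0 < a := by positivity
  have har : √d * a ≤ r / 4 := le_of_eq (by simp only [a]; field_simp)
  set C := 8 * M * √d / r
  have h2k : (0 : ℝ) < 2 ^ Fintype.card {i // ¬P i} - 1 :=
    sub_pos.2 (one_lt_pow₀ one_lt_two (by omega))
  set c := c₀ * (2 * a) ^ Fintype.card {i // P i} * (2 ^ Fintype.card {i // ¬P i} - 1)
    / (2 * C) ^ Fintype.card {i // P i}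
  set F := frontier (minorantSlopes P v) ∩ closedBall 0 (4 * M)
  have hF : volume F = 0 :=
    measure_mono_null Set.inter_subset_left ((convex_minorantSlopes P v).addHaar_frontier volume)
  have hsmall : ∀ᶠ η in 𝓝 0, volume (cthickening η F) < ENNReal.ofReal c :=
    (tendsto_measure_cthickening_of_isCompact ((isCompact_closedBall _ _).inter_left
      isClosed_frontier)).eventually_lt_const (by rw [hF, ENNReal.ofReal_pos]; positivity)
  obtain ⟨η, hηF, hη⟩ :=
    ((hsmall.filter_mono nhdsWithin_le_nhds).and (self_mem_nhdsWithin (s := Set.Ioi 0))).exists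
  obtain ⟨ε, hε, hεa, hsub⟩ :=
    exists_normalCoords_subdiff_mem_cthickening hr0 hr1 hflat hvc hv0 hbound ha har hη
  have hball : box P a ε \ box P a (ε / 2) ⊆ ball 0 1 := fun x hx =>
    mem_ball_zero_iff.2 <| (norm_le_of_mem_box hε.le hεa hx.1).trans_lt <| by
      simp only [Fintype.card_fin]; linarith
  refine (ofReal_le_volume_of_normalCoords_subdiff_mem hc₀ hMA hkm (by positivity) ha.le hε
    (by nlinarith) hball fun x hx p hp => ⟨fun i hi => ?_, hsub x hx p hp⟩).not_gt hηF
  exact abs_apply_le_of_mem_box hr0 hr1 hflat hv0 hbound har hε.le hεa hx.1 hp hi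

end Subdifferential

end AlexandrovHeinz

open AlexandrovHeinz

theorem stmt8_general (d k : ℕ) (hk : 1 ≤ k) (hkd : 2 * k ≤ d)
    (h : EuclideanSpace ℝ (Fin d) → ℝ)
    (hcont : ContinuousOn h (Metric.closedBall (0 : EuclideanSpace ℝ (Fin d)) 1))
    (hconv : ConvexOn ℝ (Metric.closedBall (0 : EuclideanSpace ℝ (Fin d)) 1) h)
    (c₀ : ℝ) (hc₀ : 0 < c₀)
    (hMA : ∀ ω : Set (EuclideanSpace ℝ (Fin d)), MeasurableSet ω →
        ω ⊆ Metric.ball (0 : EuclideanSpace ℝ (Fin d)) 1 →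
        ENNReal.ofReal c₀ * volume ω
          ≤ volume (subdiffSet (Metric.ball (0 : EuclideanSpace ℝ (Fin d)) 1) h ω))
    (r : ℝ) (hr0 : 0 < r) (hr1 : r < 1)
    (hvanish : ∀ x : EuclideanSpace ℝ (Fin d), ‖x‖ = r →
        (∀ i : Fin d, d - k ≤ (i : ℕ) → x i = 0) → h x = 0) :
    h 0 < 0 := by
  set P : Fin d → Prop := fun i => (i : ℕ) < d - k
  have hi : P ⟨0, by omega⟩ := show 0 < d - k by omega
  have hm : Fintype.card {i // P i} = d - k := Fintype.card_fin_lt_of_le (Nat.sub_le d k)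
  have hk' : Fintype.card {i // ¬P i} = k := by
    rw [Fintype.card_subtype_compl, hm, Fintype.card_fin]
    omega
  have hsphere (x) (hx : normalCoords P x = 0) (hxr : ‖x‖ = r) : h x = 0 :=
    hvanish x hxr fun i hi => normalCoords_eq_zero_iff.1 hx i (not_lt.2 hi)
  have hconvB := hconv.subset ball_subset_closedBall (convex_ball 0 1)
  have h0 : h 0 ≤ 0 := apply_le_zero_of_normalCoords_eq_zero hconvB hr1 hi hsphere (map_zero _)
    (by simpa using hr0.le)
  refine h0.lt_of_ne fun h00 => ?_
  obtain ⟨p₀, hp₀⟩ := hconvB.subdiff_nonempty (hcont.mono ball_subset_closedBall) isOpen_ball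
    (mem_ball_self one_pos)
  replace hp₀ (y) (hy : y ∈ ball (0 : EuclideanSpace ℝ (Fin d)) 1) : ⟪p₀, y⟫ ≤ h y := by
    simpa [h00] using hp₀ y hy
  have hvc : ContinuousOn (fun y => h y - ⟪p₀, y⟫) (closedBall 0 1) := hcont.sub (by fun_prop)
  exact not_mongeAmpereBoundedBelow_of_normalCoords_eq_zero (P := P) (by omega) (by omega)
    (hvc.mono ball_subset_closedBall) (fun y hy => sub_nonneg.2 (hp₀ y hy))
    (((isCompact_closedBall 0 1).bddAbove_image hvc).mono (Set.image_mono ball_subset_closedBall))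
    hr0 hr1 (fun y hy hyr => sub_eq_zero.2
      (apply_eq_inner_of_normalCoords_eq_zero hconvB hr1 hi hsphere hp₀ hy hyr)) hc₀
    (MongeAmpereBoundedBelow.sub_inner hMA p₀)

/-- **Multidimensional Alexandrov–Heinz theorem.** Let `d ≥ 2`,
`1 ≤ k`, `2k ≤ d`.  Let `h` be continuous and convex on the closed unit ball of
`ℝ^d`, whose Monge–Ampère measure on the open ball `B` satisfies
`L(∂h(ω)) ≥ c₀·L(ω)` for every Borel `ω ⊆ B`, with `c₀ > 0`.  If `h` vanishes on
the sphere of radius `r ∈ (0,1)` of the coordinate subspace where the last `k`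
coordinates vanish (a `(d−k)`-dimensional sphere), then `h 0 < 0`. -/
theorem stmt8 (d k : ℕ) (hd : 2 ≤ d) (hk : 1 ≤ k) (hkd : 2 * k ≤ d)
    (h : EuclideanSpace ℝ (Fin d) → ℝ)
    (hcont : ContinuousOn h (Metric.closedBall (0 : EuclideanSpace ℝ (Fin d)) 1))
    (hconv : ConvexOn ℝ (Metric.closedBall (0 : EuclideanSpace ℝ (Fin d)) 1) h)
    (c₀ : ℝ) (hc₀ : 0 < c₀)
    (hMA : ∀ ω : Set (EuclideanSpace ℝ (Fin d)), MeasurableSet ω →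
        ω ⊆ Metric.ball (0 : EuclideanSpace ℝ (Fin d)) 1 →
        ENNReal.ofReal c₀ * volume ω
          ≤ volume (subdiffSet (Metric.ball (0 : EuclideanSpace ℝ (Fin d)) 1) h ω))
    (r : ℝ) (hr0 : 0 < r) (hr1 : r < 1)
    (hvanish : ∀ x : EuclideanSpace ℝ (Fin d), ‖x‖ = r →
        (∀ i : Fin d, d - k ≤ (i : ℕ) → x i = 0) → h x = 0) :
    h 0 < 0 :=
  stmt8_general d k hk hkd h hcont hconv c₀ hc₀ hMA r hr0 hr1 hvanish
end

section
/- Let O ⊆ ℝ^d be open and let h : O → ℝ be convex and of class C². Then for every Borel set ω ⊆ O, the Lebesgue measure of the image of ω under the gradient map, L( { ∇h(x) : x ∈ ω } ), equals ∫_ω det(Hess h(x)) dx, the Lebesgue integral over ω of the (nonnegative) determinant of the Hessian of h. -/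
/-!
The Hessian of a convex `C²` function is positive semidefinite, so its determinant is
nonnegative. The gradient is injective where the Hessian is nondegenerate: if
`∇h a = ∇h b`, the directional derivative of `h` in direction `b - a` is monotone along the
segment `[a, b]` and takes equal values at its ends, hence is constant, so `Hess h a` kills
`b - a`. The change of variables formula then applies to the gradient on the noncritical
part of `ω`, and the critical part contributes nothing to either side.
-/

open MeasureTheory Set Filter InnerProductSpace
open scoped RealInnerProductSpace Topology

namespace LinearMap

variable {E : Type*} [NormedAddCommGroup E] [InnerProductSpace ℝ E]

theorem IsPositive.det_nonneg [FiniteDimensional ℝ E] {T : E →ₗ[ℝ] E} (hT : T.IsPositive) :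
    0 ≤ T.det := by
  let b := stdOrthonormalBasis ℝ E
  rw [← LinearMap.det_toMatrix b.toBasis]
  exact ((posSemidef_toMatrix_iff b).2 hT).det_nonneg

/-- The quadratic `t ↦ ⟪T (v + t w), v + t w⟫` has no constant term, so it stays nonnegative
only if its linear coefficient `2 ⟪T v, w⟫` vanishes. -/
theorem IsPositive.apply_eq_zero_of_inner_apply_self_eq_zero {T : E →ₗ[ℝ] E}
    (hT : T.IsPositive) {v : E} (hv : ⟪T v, v⟫ = 0) : T v = 0 := by
  suffices h : ∀ w, ⟪T v, w⟫ = 0 from inner_self_eq_zero.1 (h (T v))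
  intro w
  have hquad : ∀ t : ℝ, 0 ≤ ⟪T w, w⟫ * (t * t) + 2 * ⟪T v, w⟫ * t + 0 := by
    intro t
    have := hT.inner_nonneg_left (v + t • w)
    simp only [map_add, map_smul, inner_add_left, inner_add_right, real_inner_smul_left,
      real_inner_smul_right, hv, hT.isSymmetric w v, real_inner_comm (T v) w] at this
    linarith
  have := discrim_le_zero hquad
  rw [discrim] at this
  nlinarith [sq_nonneg ⟪T v, w⟫]

end LinearMap

section Directional

variable {E : Type*} [NormedAddCommGroup E] [NormedSpace ℝ E] {f : E → ℝ} {O : Set E}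

theorem hasDerivAt_add_smul (x v : E) (t : ℝ) : HasDerivAt (fun s : ℝ => x + s • v) v t := by
  simpa using ((hasDerivAt_id t).smul_const v).const_add x

theorem ContDiffAt.differentiableAt_fderiv {x : E} (hf : ContDiffAt ℝ 2 f x) :
    DifferentiableAt ℝ (fderiv ℝ f) x :=
  (hf.fderiv_right (m := 1) le_rfl).differentiableAt one_ne_zero

theorem DifferentiableAt.hasDerivAt_fderiv_apply_add_smul {x : E}
    (hf : DifferentiableAt ℝ (fderiv ℝ f) x) (v : E) :
    HasDerivAt (fun t : ℝ => fderiv ℝ f (x + t • v) v) (fderiv ℝ (fderiv ℝ f) x v v) 0 :=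
  (ContinuousLinearMap.apply ℝ ℝ v).hasFDerivAt.comp_hasDerivAt 0
    (hf.hasFDerivAt.hasLineDerivAt v)

theorem ConvexOn.monotoneOn_fderiv_apply_add_smul (hconv : ConvexOn ℝ O f)
    (hf : ∀ y ∈ O, DifferentiableAt ℝ f y) (x v : E) :
    MonotoneOn (fun t : ℝ => fderiv ℝ f (x + t • v) v) {t | x + t • v ∈ O} := by
  let L : ℝ →ᵃ[ℝ] E := AffineMap.lineMap x (x + v)
  have hL : ⇑L = fun t : ℝ => x + t • v := by
    ext t
    simp [L, AffineMap.lineMap_apply, add_comm]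
  have hconvL : ConvexOn ℝ {t | x + t • v ∈ O} (fun t : ℝ => f (x + t • v)) := by
    have := hconv.comp_affineMap L
    rwa [hL] at this
  refine (hconvL.monotoneOn_deriv fun t ht => ?_).congr fun t ht => ?_
  · exact (hf _ ht).comp t (hasDerivAt_add_smul x v t).differentiableAt
  · exact ((hf _ ht).hasFDerivAt.comp_hasDerivAt t (hasDerivAt_add_smul x v t)).deriv

end Directional

section Hessian

variable {E : Type*} [NormedAddCommGroup E] [InnerProductSpace ℝ E] [CompleteSpace E]
  {f : E → ℝ} {O : Set E} {x : E}

theorem ContDiffAt.hasFDerivAt_gradient (hf : ContDiffAt ℝ 2 f x) :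
    HasFDerivAt (gradient f)
      ((toDual ℝ E).symm.toContinuousLinearEquiv.toContinuousLinearMap ∘L
        fderiv ℝ (fderiv ℝ f) x) x :=
  (toDual ℝ E).symm.toContinuousLinearEquiv.hasFDerivAt.comp x
    hf.differentiableAt_fderiv.hasFDerivAt

theorem ContDiffAt.inner_fderiv_gradient_apply (hf : ContDiffAt ℝ 2 f x) (v w : E) :
    ⟪fderiv ℝ (gradient f) x v, w⟫ = fderiv ℝ (fderiv ℝ f) x v w := by
  rw [hf.hasFDerivAt_gradient.fderiv]
  exact toDual_symm_apply

theorem ContDiffAt.isSymmetric_fderiv_gradient (hf : ContDiffAt ℝ 2 f x) :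
    (fderiv ℝ (gradient f) x : E →ₗ[ℝ] E).IsSymmetric := by
  have hsymm : IsSymmSndFDerivAt ℝ f x :=
    hf.isSymmSndFDerivAt (by simp [minSmoothness_of_isRCLikeNormedField])
  intro v w
  simp only [ContinuousLinearMap.coe_coe]
  rw [real_inner_comm _ v, hf.inner_fderiv_gradient_apply, hf.inner_fderiv_gradient_apply, hsymm]

theorem ConvexOn.isPositive_fderiv_gradient (hconv : ConvexOn ℝ O f) (hO : IsOpen O)
    (hf : ContDiffOn ℝ 2 f O) (hx : x ∈ O) :
    (fderiv ℝ (gradient f) x : E →ₗ[ℝ] E).IsPositive := by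
  have hfx : ContDiffAt ℝ 2 f x := hf.contDiffAt (hO.mem_nhds hx)
  refine ⟨hfx.isSymmetric_fderiv_gradient, fun v => ?_⟩
  have hmono := hconv.monotoneOn_fderiv_apply_add_smul
    (fun y hy => (hf.contDiffAt (hO.mem_nhds hy)).differentiableAt two_ne_zero) x v
  have hnhds : {t : ℝ | x + t • v ∈ O} ∈ 𝓝 0 :=
    (hO.preimage (by fun_prop)).mem_nhds (by simpa using hx)
  have hderiv := hfx.differentiableAt_fderiv.hasDerivAt_fderiv_apply_add_smul v
  simpa [hfx.inner_fderiv_gradient_apply] using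
    hderiv.hasDerivWithinAt.nonneg_of_monotoneOn
      (accPt_iff_frequently_nhdsNE.2 (eventually_nhdsWithin_of_eventually_nhds hnhds).frequently)
      hmono

theorem ConvexOn.fderiv_gradient_apply_sub_eq_zero (hconv : ConvexOn ℝ O f) (hO : IsOpen O)
    (hf : ContDiffOn ℝ 2 f O) {a b : E} (ha : a ∈ O) (hb : b ∈ O)
    (hab : gradient f a = gradient f b) :
    fderiv ℝ (gradient f) a (b - a) = 0 := by
  have hfa : ContDiffAt ℝ 2 f a := hf.contDiffAt (hO.mem_nhds ha)
  set φ := fun t : ℝ => fderiv ℝ f (a + t • (b - a)) (b - a)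
  have hmono : MonotoneOn φ (Icc 0 1) :=
    (hconv.monotoneOn_fderiv_apply_add_smul
      (fun y hy => (hf.contDiffAt (hO.mem_nhds hy)).differentiableAt two_ne_zero) a (b - a)).mono
      fun t ht => hconv.1.add_smul_sub_mem ha hb ht
  have hφ1 : φ 1 = φ 0 := by
    simp [φ, (toDual ℝ E).symm.injective hab]
  have hconst : EqOn φ (fun _ => φ 0) (Icc 0 1) := fun t ht =>
    le_antisymm (hφ1 ▸ hmono ht ⟨zero_le_one, le_rfl⟩ ht.2)
      (hmono ⟨le_rfl, zero_le_one⟩ ht ht.1)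
  have hderiv := hfa.differentiableAt_fderiv.hasDerivAt_fderiv_apply_add_smul (b - a)
  have hzero : fderiv ℝ (fderiv ℝ f) a (b - a) (b - a) = 0 :=
    (uniqueDiffOn_Icc zero_lt_one 0 ⟨le_rfl, zero_le_one⟩).eq_deriv _ hderiv.hasDerivWithinAt
      ((hasDerivWithinAt_const 0 _ (φ 0)).congr hconst rfl)
  exact (hconv.isPositive_fderiv_gradient hO hf ha).apply_eq_zero_of_inner_apply_self_eq_zero
    (by rw [ContinuousLinearMap.coe_coe, hfa.inner_fderiv_gradient_apply, hzero])

theorem ConvexOn.injOn_gradient [FiniteDimensional ℝ E] (hconv : ConvexOn ℝ O f)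
    (hO : IsOpen O) (hf : ContDiffOn ℝ 2 f O) :
    InjOn (gradient f) {x ∈ O | (fderiv ℝ (gradient f) x).det ≠ 0} := by
  intro a ha b hb hab
  have hker := hconv.fderiv_gradient_apply_sub_eq_zero hO hf ha.1 hb.1 hab
  have hbot := not_not.1 (LinearMap.det_eq_zero_iff_ker_ne_bot.not.1 ha.2)
  exact (sub_eq_zero.1 (LinearMap.ker_eq_bot'.1 hbot _ hker)).symm

end Hessian

section Area

variable {E : Type*} [NormedAddCommGroup E] [NormedSpace ℝ E] [FiniteDimensional ℝ E]
  [MeasurableSpace E] [BorelSpace E] (μ : Measure E) [μ.IsAddHaarMeasure]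

/-- The upper bound `μ (f '' s) ≤ ∫⁻ |det f'|` needs no injectivity, and the integrand vanishes
on the critical points, so injectivity is only used off them. -/
theorem addHaar_image_eq_lintegral_abs_det_fderiv_of_injOn_det_ne_zero {s : Set E}
    {f : E → E} {f' : E → E →L[ℝ] E} (hs : MeasurableSet s)
    (hf' : ∀ x ∈ s, HasFDerivWithinAt f (f' x) s x) (hf'_meas : Measurable f')
    (hf : InjOn f {x ∈ s | (f' x).det ≠ 0}) :
    μ (f '' s) = ∫⁻ x in s, ENNReal.ofReal |(f' x).det| ∂μ := by
  set B := {x | (f' x).det ≠ 0}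
  have hB : MeasurableSet B :=
    (ContinuousLinearMap.continuous_det.measurable.comp hf'_meas) (measurableSet_singleton 0).compl
  refine le_antisymm (addHaar_image_le_lintegral_abs_det_fderiv μ hs hf') ?_
  calc ∫⁻ x in s, ENNReal.ofReal |(f' x).det| ∂μ
      = ∫⁻ x in s ∩ B, ENNReal.ofReal |(f' x).det| ∂μ := by
        rw [← lintegral_inter_add_sdiff _ s hB, setLIntegral_eq_zero (hs.diff hB), add_zero]
        intro x hx
        simp [not_not.1 hx.2]
    _ = μ (f '' (s ∩ B)) := lintegral_abs_det_fderiv_eq_addHaar_image μ (hs.inter hB)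
        (fun x hx => (hf' x hx.1).mono inter_subset_left) hf
    _ ≤ μ (f '' s) := measure_mono (image_mono inter_subset_left)

end Area

/-- Let `O ⊆ ℝ^d` be open and let `h : O → ℝ` be convex and of class
`C²`.  Then for every Borel `ω ⊆ O`, the Lebesgue measure of the image of `ω` under the
gradient map equals the Lebesgue integral over `ω` of the (nonnegative) determinant of
the Hessian of `h`; i.e. the Monge–Ampère measure of a `C²` convex function has density
`det (Hess h)` with respect to Lebesgue measure. -/
theorem stmt10 (d : ℕ) (O : Set (EuclideanSpace ℝ (Fin d))) (hO : IsOpen O)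
    (h : EuclideanSpace ℝ (Fin d) → ℝ)
    (hconv : ConvexOn ℝ O h) (hreg : ContDiffOn ℝ 2 h O)
    (ω : Set (EuclideanSpace ℝ (Fin d))) (hmeas : MeasurableSet ω) (hω : ω ⊆ O) :
    volume ((fun x => gradient h x) '' ω)
      = ∫⁻ x in ω, ENNReal.ofReal
          (LinearMap.det
            (↑(fderiv ℝ (gradient h) x) :
              EuclideanSpace ℝ (Fin d) →ₗ[ℝ] EuclideanSpace ℝ (Fin d))) := by
  have hderiv : ∀ x ∈ ω, HasFDerivWithinAt (gradient h) (fderiv ℝ (gradient h) x) ω x :=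
    fun x hx => (hreg.contDiffAt (hO.mem_nhds (hω hx))).hasFDerivAt_gradient.differentiableAt
      |>.hasFDerivAt.hasFDerivWithinAt
  have hinj : InjOn (gradient h) {x ∈ ω | (fderiv ℝ (gradient h) x).det ≠ 0} :=
    (hconv.injOn_gradient hO hreg).mono (inter_subset_inter_left _ hω)
  rw [addHaar_image_eq_lintegral_abs_det_fderiv_of_injOn_det_ne_zero volume hmeas hderiv
    (measurable_fderiv ℝ (gradient h)) hinj]
  refine setLIntegral_congr_fun hmeas fun x hx => ?_
  rw [abs_of_nonneg (hconv.isPositive_fderiv_gradient hO hreg (hω hx)).det_nonneg]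
end

section
/- Let d ≥ 1 and let B be the open unit ball of ℝ^d. Let u : ℝ^d → ℝ be a convex, 1-Lipschitz function such that u*(y) := sup_{x ∈ ℝ^d} (⟨x, y⟩ − u(x)) < ∞ for every y ∈ B. Then there exists a sequence (v_n) of C^∞ convex functions v_n : ℝ^d → ℝ whose Hessian is positive definite at every point, such that v_n*(y) < ∞ for every y ∈ B and v_n*(y) → u*(y) as n → ∞ for every y ∈ B. -/
set_option maxHeartbeats 1000000

open scoped RealInnerProductSpace ContDiff
open Filter Topology

/-- A monotone function has nonnegative derivative wherever it is differentiable. -/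
lemma aux_mono_deriv_nonneg {f : ℝ → ℝ} {a t : ℝ} (hm : Monotone f)
    (hd : HasDerivAt f a t) : 0 ≤ a := by
  have hT : Tendsto (slope f t) (𝓝[≠] t) (𝓝 a) := hasDerivAt_iff_tendsto_slope.mp hd
  refine ge_of_tendsto hT ?_
  filter_upwards [eventually_mem_nhdsWithin] with s hs
  rcases lt_or_gt_of_ne (Set.mem_compl_singleton_iff.mp hs) with h | h
  · have h1 : f s - f t ≤ 0 := sub_nonpos.mpr (hm h.le)
    have h2 : s - t < 0 := sub_neg.mpr h
    rw [slope_def_field]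
    exact div_nonneg_of_nonpos h1 h2.le
  · have h1 : 0 ≤ f s - f t := sub_nonneg.mpr (hm h.le)
    have h2 : 0 < s - t := sub_pos.mpr h
    rw [slope_def_field]
    exact div_nonneg h1 h2.le

/-- Second derivative along a line equals the Hessian applied to the direction twice. -/
lemma aux_second_deriv_line {E : Type*} [NormedAddCommGroup E] [NormedSpace ℝ E]
    (f : E → ℝ) (hf : ContDiff ℝ (⊤ : ℕ∞) f) (x w : E) :
    deriv (deriv (fun t : ℝ => f (x + t • w))) 0 = fderiv ℝ (fderiv ℝ f) x w w := by
  have hL : ∀ t : ℝ, HasDerivAt (fun s : ℝ => x + s • w) w t := by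
    intro t
    simpa using ((hasDerivAt_id t).smul_const w).const_add x
  have hd1 : ∀ t : ℝ, HasDerivAt (fun s : ℝ => f (x + s • w)) (fderiv ℝ f (x + t • w) w) t :=
    fun t => ((hf.differentiable (by simp) (x + t • w)).hasFDerivAt).comp_hasDerivAt t (hL t)
  have hde : deriv (fun t : ℝ => f (x + t • w)) = fun t => fderiv ℝ f (x + t • w) w :=
    funext fun t => (hd1 t).deriv
  rw [hde]
  have hx0 : x + (0 : ℝ) • w = x := by simp
  have hff : HasFDerivAt (fderiv ℝ f) (fderiv ℝ (fderiv ℝ f) x) (x + (0 : ℝ) • w) := by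
    rw [hx0]
    exact ((hf.fderiv_right (m := 1) (by norm_cast)).differentiable one_ne_zero x).hasFDerivAt
  have h2 : HasDerivAt (fun t : ℝ => fderiv ℝ f (x + t • w)) (fderiv ℝ (fderiv ℝ f) x w) 0 :=
    hff.comp_hasDerivAt 0 (hL 0)
  have h3 : HasDerivAt (fun t : ℝ => fderiv ℝ f (x + t • w) w)
      (fderiv ℝ (fderiv ℝ f) x w w) 0 := by
    simpa [hx0] using h2.clm_apply (hasDerivAt_const 0 w)
  exact h3.deriv

/-- A smooth convex function on ℝ has nonnegative second derivative. -/
lemma aux_deriv2_nonneg {h : ℝ → ℝ} (hc : ConvexOn ℝ Set.univ h) (hs : ContDiff ℝ (⊤ : ℕ∞) h)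
    (t : ℝ) : 0 ≤ deriv (deriv h) t := by
  have hdiff : Differentiable ℝ h := hs.differentiable (by simp)
  have hmono : Monotone (deriv h) := by
    have := hc.monotoneOn_deriv (fun x _ => (hdiff x))
    rwa [monotoneOn_univ] at this
  have h1 : (1 : WithTop ℕ∞) ≤ ∞ := by
    exact_mod_cast (le_top : (1 : ℕ∞) ≤ ⊤)
  have hd2 : Differentiable ℝ (deriv h) :=
    (contDiff_infty_iff_deriv.mp (hs.of_le (by simp))).2.differentiable (by simp)
  exact aux_mono_deriv_nonneg hmono (hd2 t).hasDerivAt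

/-- `x ↦ ⟪x, x⟫` is convex. -/
lemma aux_convexOn_inner {E : Type*} [NormedAddCommGroup E] [InnerProductSpace ℝ E] :
    ConvexOn ℝ Set.univ (fun x : E => ⟪x, x⟫) := by
  refine ⟨convex_univ, fun x _ y _ a b ha hb hab => ?_⟩
  simp only [real_inner_add_add_self, real_inner_smul_left, real_inner_smul_right, smul_eq_mul]
  have h5 : 0 ≤ a * b * (⟪x, x⟫ - 2 * ⟪x, y⟫ + ⟪y, y⟫) := by
    rw [← real_inner_sub_sub_self]
    exact mul_nonneg (mul_nonneg ha hb) real_inner_self_nonneg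
  have hb' : b = 1 - a := by linarith
  subst hb'
  nlinarith [h5]

/-- Restriction of a convex function to a line is convex. -/
lemma aux_line_convex {E : Type*} [NormedAddCommGroup E] [NormedSpace ℝ E]
    {f : E → ℝ} (hf : ConvexOn ℝ Set.univ f) (x w : E) :
    ConvexOn ℝ Set.univ (fun t : ℝ => f (x + t • w)) := by
  refine ⟨convex_univ, fun t _ s _ a b ha hb hab => ?_⟩
  have hb' : b = 1 - a := by linarith
  subst hb'
  have hpt : x + (a * t + (1 - a) * s) • w = a • (x + t • w) + (1 - a) • (x + s • w) := by
    module
  show f (x + (a * t + (1 - a) * s) • w) ≤ a * f (x + t • w) + (1 - a) * f (x + s • w)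
  rw [hpt]
  have := hf.2 (Set.mem_univ (x + t • w)) (Set.mem_univ (x + s • w)) ha hb hab
  simpa using this

/-- Existence of subgradients for a convex Lipschitz function on a real Hilbert space. -/
lemma aux_exists_subgrad {E : Type*} [NormedAddCommGroup E] [InnerProductSpace ℝ E]
    [CompleteSpace E] {u : E → ℝ} (hconv : ConvexOn ℝ Set.univ u) (hlip : LipschitzWith 1 u)
    (z : E) : ∃ w : E, ‖w‖ ≤ 1 ∧ ∀ x, u z + ⟪w, x - z⟫ ≤ u x := by
  classical
  set s : Set (E × ℝ) := {p | u p.1 < p.2} with hs_def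
  have hs_conv : Convex ℝ s := by
    intro p hp q hq a b ha hb hab
    have hcomb := hconv.2 (Set.mem_univ p.1) (Set.mem_univ q.1) ha hb hab
    simp only [smul_eq_mul] at hcomb
    rcases eq_or_lt_of_le ha with rfl | ha'
    · have hb1 : b = 1 := by linarith
      simpa [hb1, hs_def] using hq
    · have h1 : a * u p.1 < a * p.2 := by
        exact mul_lt_mul_of_pos_left hp ha'
      have h2 : b * u q.1 ≤ b * q.2 := mul_le_mul_of_nonneg_left (le_of_lt hq) hb
      have : u (a • p.1 + b • q.1) < a * p.2 + b * q.2 := lt_of_le_of_lt hcomb (by linarith)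
      simpa [hs_def] using this
  have hs_open : IsOpen s := by
    have : s = (fun p : E × ℝ => p.2 - u p.1) ⁻¹' Set.Ioi 0 := by
      ext p; simp [hs_def, sub_pos]
    rw [this]
    exact (continuous_snd.sub (hlip.continuous.comp continuous_fst)).isOpen_preimage _ isOpen_Ioi
  have hz_not : (z, u z) ∉ s := by simp [hs_def]
  obtain ⟨f, hf⟩ := geometric_hahn_banach_open_point hs_conv hs_open hz_not
  set g : E →L[ℝ] ℝ := f.comp (ContinuousLinearMap.inl ℝ E ℝ) with hg_def
  set β : ℝ := f (0, 1) with hβ_def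
  have hsplit : ∀ (x : E) (r : ℝ), f (x, r) = g x + r * β := by
    intro x r
    have : (x, r) = (x, (0:ℝ)) + r • ((0:E), (1:ℝ)) := by
      simp [Prod.ext_iff]
    rw [this, map_add, map_smul]
    simp [hg_def, hβ_def, smul_eq_mul]
  have hβ_neg : β < 0 := by
    have h1 : f (z, u z + 1) < f (z, u z) := by
      apply hf
      simp only [hs_def, Set.mem_setOf_eq]
      linarith
    rw [hsplit, hsplit] at h1
    nlinarith
  set c : ℝ := -β with hc_def
  have hc : 0 < c := by simp only [hc_def]; linarith
  have hβc : β = -c := by simp [hc_def]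
  have hkey : ∀ x : E, g x + u x * β ≤ g z + u z * β := by
    intro x
    by_contra hcon
    push_neg at hcon
    set D : ℝ := g x + u x * β - (g z + u z * β) with hD_def
    have hD : 0 < D := by linarith
    have ht : 0 < D / (2 * c) := by positivity
    have hstep := hf (x, u x + D / (2 * c)) (by
      simp only [hs_def, Set.mem_setOf_eq]
      linarith)
    rw [hsplit, hsplit] at hstep
    have htc : D / (2 * c) * c = D / 2 := by
      field_simp
    have hexp : (u x + D / (2 * c)) * β = u x * β - D / 2 := by
      rw [hβc]
      nlinarith [htc]
    rw [hexp] at hstep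
    linarith
  set ℓ : E →L[ℝ] ℝ := c⁻¹ • g with hℓ_def
  set w : E := (InnerProductSpace.toDual ℝ E).symm ℓ with hw_def
  have hw_app : ∀ v : E, ⟪w, v⟫ = ℓ v := fun v => InnerProductSpace.toDual_symm_apply
  have hmin : ∀ x, u z + ⟪w, x - z⟫ ≤ u x := by
    intro x
    have h1 := hkey x
    rw [hβc] at h1
    have h2 : ⟪w, x - z⟫ = c⁻¹ * (g x - g z) := by
      rw [hw_app, hℓ_def]
      simp only [ContinuousLinearMap.smul_apply, map_sub, smul_eq_mul]
      ring
    rw [h2]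
    rw [← mul_le_mul_iff_right₀ hc]
    have hexp : c * (u z + c⁻¹ * (g x - g z)) = c * u z + (g x - g z) := by
      field_simp
    rw [hexp]
    nlinarith [h1]
  refine ⟨w, ?_, hmin⟩
  have h1 := hmin (z + w)
  have h2 : u (z + w) - u z ≤ ‖w‖ := by
    have := hlip.dist_le_mul (z + w) z
    rw [Real.dist_eq, dist_eq_norm] at this
    simp only [NNReal.coe_one, one_mul, add_sub_cancel_left] at this
    calc u (z + w) - u z ≤ |u (z + w) - u z| := le_abs_self _
    _ ≤ ‖w‖ := this
  have h3 : ⟪w, w⟫ ≤ ‖w‖ := by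
    have heq : z + w - z = w := by abel
    rw [heq] at h1
    linarith
  rw [real_inner_self_eq_norm_sq] at h3
  nlinarith [norm_nonneg w]

/-- Convexity of log-sum-exp of affine functions. -/
lemma aux_lse_convex {E : Type*} [NormedAddCommGroup E] [InnerProductSpace ℝ E]
    {ι : Type*} (s : Finset ι) (hs : s.Nonempty) (c : ι → ℝ) (p : ι → E) :
    ConvexOn ℝ Set.univ (fun x : E => Real.log (∑ z ∈ s, Real.exp (c z + ⟪p z, x⟫))) := by
  have hpos : ∀ x : E, 0 < ∑ z ∈ s, Real.exp (c z + ⟪p z, x⟫) := fun x =>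
    Finset.sum_pos (fun z _ => Real.exp_pos _) hs
  refine ⟨convex_univ, fun x _ y _ a b ha hb hab => ?_⟩
  rcases eq_or_lt_of_le ha with rfl | ha'
  · have hb1 : b = 1 := by linarith
    simp [hb1]
  rcases eq_or_lt_of_le hb with rfl | hb'
  · have ha1 : a = 1 := by linarith
    simp [ha1]
  set A : ι → ℝ := fun z => Real.exp (c z + ⟪p z, x⟫) with hA
  set B : ι → ℝ := fun z => Real.exp (c z + ⟪p z, y⟫) with hB
  have key : ∀ z ∈ s, Real.exp (c z + ⟪p z, a • x + b • y⟫) = A z ^ a * B z ^ b := by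
    intro z _
    rw [inner_add_right, real_inner_smul_right, real_inner_smul_right]
    have hsplit : c z + (a * ⟪p z, x⟫ + b * ⟪p z, y⟫)
        = (c z + ⟪p z, x⟫) * a + (c z + ⟪p z, y⟫) * b := by
      linear_combination (-(c z)) * hab
    rw [hsplit, Real.exp_add, Real.exp_mul, Real.exp_mul]
  have holder : ∑ z ∈ s, A z ^ a * B z ^ b ≤ (∑ z ∈ s, A z) ^ a * (∑ z ∈ s, B z) ^ b := by
    have hpq : Real.HolderConjugate (1/a) (1/b) := by
      rw [Real.holderConjugate_iff]
      constructor
      · rw [lt_div_iff₀ ha']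
        linarith
      · rw [one_div, inv_inv, one_div, inv_inv]
        exact hab
    have := Real.inner_le_Lp_mul_Lq_of_nonneg hpq
      (f := fun z => A z ^ a) (g := fun z => B z ^ b) (s := s)
      (fun i _ => Real.rpow_nonneg (Real.exp_pos _).le _)
      (fun i _ => Real.rpow_nonneg (Real.exp_pos _).le _)
    have hfa : ∀ z, (A z ^ a) ^ (1/a : ℝ) = A z := fun z => by
      rw [← Real.rpow_mul (Real.exp_pos _).le, mul_one_div_cancel ha'.ne', Real.rpow_one]
    have hfb : ∀ z, (B z ^ b) ^ (1/b : ℝ) = B z := fun z => by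
      rw [← Real.rpow_mul (Real.exp_pos _).le, mul_one_div_cancel hb'.ne', Real.rpow_one]
    simp only [one_div_one_div] at this
    calc ∑ z ∈ s, A z ^ a * B z ^ b
        ≤ (∑ z ∈ s, (A z ^ a) ^ (1/a : ℝ)) ^ (a : ℝ) * (∑ z ∈ s, (B z ^ b) ^ (1/b : ℝ)) ^ (b : ℝ) := by
          simpa [one_div_one_div] using this
      _ = (∑ z ∈ s, A z) ^ a * (∑ z ∈ s, B z) ^ b := by
          rw [Finset.sum_congr rfl (fun z _ => hfa z), Finset.sum_congr rfl (fun z _ => hfb z)]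
  calc Real.log (∑ z ∈ s, Real.exp (c z + ⟪p z, a • x + b • y⟫))
      = Real.log (∑ z ∈ s, A z ^ a * B z ^ b) := by rw [Finset.sum_congr rfl key]
    _ ≤ Real.log ((∑ z ∈ s, A z) ^ a * (∑ z ∈ s, B z) ^ b) := by
        apply Real.log_le_log (Finset.sum_pos (fun z _ => by positivity) hs) holder
    _ = a * Real.log (∑ z ∈ s, A z) + b * Real.log (∑ z ∈ s, B z) := by
        rw [Real.log_mul (by positivity) (by positivity), Real.log_rpow (hpos x),
          Real.log_rpow (hpos y)]
    _ = a • Real.log (∑ z ∈ s, A z) + b • Real.log (∑ z ∈ s, B z) := by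
        simp [smul_eq_mul]

lemma aux_hessian_pos {E : Type*} [NormedAddCommGroup E] [InnerProductSpace ℝ E]
    {g : E → ℝ} (hg : ContDiff ℝ (⊤ : ℕ∞) g) (hgc : ConvexOn ℝ Set.univ g) {c : ℝ} (hc : 0 < c)
    (x w : E) (hw : w ≠ 0) :
    0 < fderiv ℝ (fderiv ℝ (fun z => g z + c * ⟪z, z⟫)) x w w := by
  have hq : ContDiff ℝ (⊤ : ℕ∞) (fun z : E => c * ⟪z, z⟫) :=
    contDiff_const.mul (ContDiff.inner ℝ contDiff_id contDiff_id)
  have hv : ContDiff ℝ (⊤ : ℕ∞) (fun z : E => g z + c * ⟪z, z⟫) := hg.add hq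
  rw [← aux_second_deriv_line _ hv x w]
  set h₁ : ℝ → ℝ := fun t => g (x + t • w) with hh₁_def
  set p : ℝ → ℝ := fun t => c * ⟪x, x⟫ + (2 * c * ⟪x, w⟫ * t + c * ⟪w, w⟫ * t ^ 2) with hp_def
  have hsum : (fun t : ℝ => g (x + t • w) + c * ⟪x + t • w, x + t • w⟫)
      = fun t => h₁ t + p t := by
    funext t
    simp only [hh₁_def, hp_def]
    rw [real_inner_add_add_self, real_inner_smul_right, real_inner_smul_left,
      real_inner_smul_right]
    ring
  have hp : ∀ t : ℝ, HasDerivAt p (2 * c * ⟪x, w⟫ + c * ⟪w, w⟫ * (2 * t)) t := by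
    intro t
    have h1 : HasDerivAt (fun t : ℝ => 2 * c * ⟪x, w⟫ * t) (2 * c * ⟪x, w⟫) t := by
      simpa using (hasDerivAt_id t).const_mul (2 * c * ⟪x, w⟫)
    have h2 : HasDerivAt (fun t : ℝ => c * ⟪w, w⟫ * t ^ 2) (c * ⟪w, w⟫ * (2 * t)) t := by
      have := (hasDerivAt_pow 2 t).const_mul (c * ⟪w, w⟫)
      simpa [mul_comm, mul_assoc, mul_left_comm] using this
    simpa [hp_def] using (h1.add h2).const_add (c * ⟪x, x⟫)
  have hline : ContDiff ℝ (⊤ : ℕ∞) (fun t : ℝ => x + t • w) :=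
    contDiff_const.add (contDiff_id.smul contDiff_const)
  have hh₁ : ContDiff ℝ (⊤ : ℕ∞) h₁ := hg.comp hline
  have hd₁ : Differentiable ℝ h₁ := hh₁.differentiable (by simp)
  have hD : deriv (fun t => h₁ t + p t)
      = fun t => deriv h₁ t + (2 * c * ⟪x, w⟫ + c * ⟪w, w⟫ * (2 * t)) := by
    funext t
    rw [deriv_fun_add (hd₁ t) (hp t).differentiableAt, (hp t).deriv]
  rw [hsum, hD]
  have h1inf : (1 : WithTop ℕ∞) ≤ ∞ := by exact_mod_cast (le_top : (1 : ℕ∞) ≤ ⊤)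
  have hDh₁ : Differentiable ℝ (deriv h₁) :=
    (contDiff_infty_iff_deriv.mp (hh₁.of_le (by simp))).2.differentiable (by simp)
  have hq2 : HasDerivAt (fun t : ℝ => 2 * c * ⟪x, w⟫ + c * ⟪w, w⟫ * (2 * t))
      (c * ⟪w, w⟫ * 2) 0 := by
    have h0 : HasDerivAt (fun t : ℝ => c * ⟪w, w⟫ * (2 * t)) (c * ⟪w, w⟫ * 2) 0 := by
      have := ((hasDerivAt_id (0:ℝ)).const_mul (2:ℝ)).const_mul (c * ⟪w, w⟫)
      simpa [mul_assoc] using this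
    simpa using h0.const_add (2 * c * ⟪x, w⟫)
  rw [deriv_fun_add (hDh₁ 0) hq2.differentiableAt, hq2.deriv]
  have hcvx₁ : ConvexOn ℝ Set.univ h₁ := aux_line_convex hgc x w
  have hnn := aux_deriv2_nonneg hcvx₁ hh₁ 0
  have hwpos : (0:ℝ) < ⟪w, w⟫ := by
    rw [real_inner_self_eq_norm_sq]
    exact pow_pos (norm_pos_iff.mpr hw) 2
  nlinarith [mul_pos hc hwpos]

/-- Let `u : ℝ^d → ℝ` be convex and 1-Lipschitz with Legendre–Fenchel
transform `u*(y) = sup_x (⟨x, y⟩ − u x)` finite on the open unit ball `B`.  Then there is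
a sequence `(v_n)` of `C^∞` convex functions with everywhere positive definite Hessian
(`D²v_n(x)(w, w) > 0` for `w ≠ 0`) whose Legendre transforms are finite on `B` and
converge pointwise on `B` to `u*`.  (This restates the paper's approximation of support
functions of F-convex sets by support functions of `C^∞₊` F-convex sets.) -/
theorem stmt11 (d : ℕ) (hd : 1 ≤ d) (u : EuclideanSpace ℝ (Fin d) → ℝ)
    (hconv : ConvexOn ℝ Set.univ u) (hlip : LipschitzWith 1 u)
    (hfin : ∀ y ∈ Metric.ball (0 : EuclideanSpace ℝ (Fin d)) 1,
        BddAbove {v : ℝ | ∃ x : EuclideanSpace ℝ (Fin d), v = ⟪x, y⟫ - u x}) :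
    ∃ v : ℕ → EuclideanSpace ℝ (Fin d) → ℝ,
      (∀ n, ContDiff ℝ (⊤ : ℕ∞) (v n)) ∧
      (∀ n, ConvexOn ℝ Set.univ (v n)) ∧
      (∀ n, ∀ x w : EuclideanSpace ℝ (Fin d), w ≠ 0 →
        0 < (fderiv ℝ (fderiv ℝ (v n)) x) w w) ∧
      (∀ n, ∀ y ∈ Metric.ball (0 : EuclideanSpace ℝ (Fin d)) 1,
        BddAbove {r : ℝ | ∃ x : EuclideanSpace ℝ (Fin d), r = ⟪x, y⟫ - v n x}) ∧
      (∀ y ∈ Metric.ball (0 : EuclideanSpace ℝ (Fin d)) 1,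
        Tendsto
          (fun n => sSup {r : ℝ | ∃ x : EuclideanSpace ℝ (Fin d), r = ⟪x, y⟫ - v n x})
          atTop
          (nhds (sSup {r : ℝ | ∃ x : EuclideanSpace ℝ (Fin d), r = ⟪x, y⟫ - u x}))) := by
  classical
  obtain ⟨w, hw⟩ : ∃ w : EuclideanSpace ℝ (Fin d) → EuclideanSpace ℝ (Fin d),
      ∀ z, ‖w z‖ ≤ 1 ∧ ∀ x, u z + ⟪w z, x - z⟫ ≤ u x := by
    choose w hw1 hw2 using fun z => aux_exists_subgrad hconv hlip z
    exact ⟨w, fun z => ⟨hw1 z, hw2 z⟩⟩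
  set a : EuclideanSpace ℝ (Fin d) → EuclideanSpace ℝ (Fin d) → ℝ :=
    fun z x => u z + ⟪w z, x - z⟫ with ha_def
  have ha_le : ∀ z x, a z x ≤ u x := fun z x => (hw z).2 x
  -- finite covers by near-touching affine minorants
  have hcover : ∀ n : ℕ, ∃ t : Finset (EuclideanSpace ℝ (Fin d)),
      (0 : EuclideanSpace ℝ (Fin d)) ∈ t ∧
      ∀ x, ‖x‖ ≤ 2 * ((n : ℝ) + 1) → ∃ z ∈ t, u x - 1 / ((n : ℝ) + 1) < a z x := by
    intro n
    have hUopen : ∀ z, IsOpen {x : EuclideanSpace ℝ (Fin d) | u x - 1 / ((n : ℝ) + 1) < a z x} := by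
      intro z
      apply isOpen_lt
      · exact (hlip.continuous.sub continuous_const)
      · exact continuous_const.add (Continuous.inner continuous_const
          (continuous_id.sub continuous_const))
    have hcov : Metric.closedBall (0 : EuclideanSpace ℝ (Fin d)) (2 * ((n : ℝ) + 1))
        ⊆ ⋃ z : EuclideanSpace ℝ (Fin d), {x | u x - 1 / ((n : ℝ) + 1) < a z x} := by
      intro x _
      refine Set.mem_iUnion.mpr ⟨x, ?_⟩
      have : a x x = u x := by simp [ha_def]
      simp only [Set.mem_setOf_eq, this]
      have : (0:ℝ) < 1 / ((n : ℝ) + 1) := by positivity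
      linarith
    obtain ⟨t, ht⟩ := (isCompact_closedBall (0 : EuclideanSpace ℝ (Fin d)) _).elim_finite_subcover
      _ hUopen hcov
    refine ⟨insert 0 t, Finset.mem_insert_self _ _, fun x hx => ?_⟩
    obtain ⟨z, hz, hzx⟩ := Set.mem_iUnion₂.mp (ht (Metric.mem_closedBall.mpr (by
      simpa [dist_zero_right] using hx)))
    exact ⟨z, Finset.mem_insert_of_mem hz, hzx⟩
  choose s hs0 hscov using hcover
  set L : ℕ → ℝ := fun n => ((n : ℝ) + 1) * (1 + Real.log ((s n).card)) with hL_def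
  have hcard : ∀ n, 1 ≤ (((s n).card : ℕ) : ℝ) := fun n => by
    exact_mod_cast Finset.card_pos.mpr ⟨0, hs0 n⟩
  have hlogN : ∀ n, 0 ≤ Real.log ((s n).card) := fun n => Real.log_nonneg (hcard n)
  have hL_pos : ∀ n, 0 < L n := fun n => by
    have h1 : (0:ℝ) < (n : ℝ) + 1 := by positivity
    have h2 := hlogN n
    show (0:ℝ) < ((n : ℝ) + 1) * (1 + Real.log ((s n).card))
    nlinarith
  set g : ℕ → EuclideanSpace ℝ (Fin d) → ℝ :=
    fun n x => (L n)⁻¹ * Real.log (∑ z ∈ s n, Real.exp (L n * a z x)) with hg_def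
  set c : ℕ → ℝ := fun n => 1 / ((n : ℝ) + 1) with hc_def
  have hc_pos : ∀ n, 0 < c n := fun n => by rw [hc_def]; positivity
  have hSpos : ∀ n x, 0 < ∑ z ∈ s n, Real.exp (L n * a z x) := fun n x =>
    Finset.sum_pos (fun z _ => Real.exp_pos _) ⟨0, hs0 n⟩
  -- upper bound for g
  have hg_le : ∀ n x, g n x ≤ u x + c n := by
    intro n x
    have hsumle : ∑ z ∈ s n, Real.exp (L n * a z x)
        ≤ ((s n).card : ℝ) * Real.exp (L n * u x) := by
      have := Finset.sum_le_card_nsmul (s n) (fun z => Real.exp (L n * a z x))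
        (Real.exp (L n * u x)) (fun z hz => by
          apply Real.exp_le_exp.mpr
          exact mul_le_mul_of_nonneg_left (ha_le z x) (hL_pos n).le)
      simpa [nsmul_eq_mul] using this
    have hlog : Real.log (∑ z ∈ s n, Real.exp (L n * a z x))
        ≤ Real.log ((s n).card) + L n * u x := by
      calc Real.log (∑ z ∈ s n, Real.exp (L n * a z x))
          ≤ Real.log (((s n).card : ℝ) * Real.exp (L n * u x)) :=
            Real.log_le_log (hSpos n x) hsumle
        _ = Real.log ((s n).card) + L n * u x := by
            have hcpos : (0:ℝ) < ((s n).card : ℝ) := lt_of_lt_of_le zero_lt_one (hcard n)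
            rw [Real.log_mul hcpos.ne' (Real.exp_ne_zero _), Real.log_exp]
    have h2 : (L n)⁻¹ * Real.log (∑ z ∈ s n, Real.exp (L n * a z x))
        ≤ (L n)⁻¹ * (Real.log ((s n).card) + L n * u x) :=
      mul_le_mul_of_nonneg_left hlog (inv_nonneg.mpr (hL_pos n).le)
    have h3 : (L n)⁻¹ * (Real.log ((s n).card) + L n * u x)
        = (L n)⁻¹ * Real.log ((s n).card) + u x := by
      rw [mul_add, inv_mul_cancel_left₀ (hL_pos n).ne']
    have h4 : (L n)⁻¹ * Real.log ((s n).card) ≤ c n := by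
      rw [inv_mul_le_iff₀ (hL_pos n), hc_def, hL_def]
      have h5 : ((n:ℝ) + 1) * (1 + Real.log ((s n).card)) * (1 / ((n:ℝ)+1))
          = 1 + Real.log ((s n).card) := by
        field_simp
      rw [h5]
      linarith [hlogN n]
    rw [hg_def]
    dsimp only
    linarith
  -- each affine minorant is below g
  have hg_ge : ∀ n x, ∀ z ∈ s n, a z x ≤ g n x := by
    intro n x z hz
    have h1 : Real.exp (L n * a z x) ≤ ∑ z' ∈ s n, Real.exp (L n * a z' x) :=
      Finset.single_le_sum (f := fun z' => Real.exp (L n * a z' x))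
        (fun z' _ => (Real.exp_pos _).le) hz
    have h2 : L n * a z x ≤ Real.log (∑ z' ∈ s n, Real.exp (L n * a z' x)) :=
      (Real.le_log_iff_exp_le (hSpos n x)).mpr h1
    have h3 := mul_le_mul_of_nonneg_left h2 (inv_nonneg.mpr (hL_pos n).le)
    rw [inv_mul_cancel_left₀ (hL_pos n).ne'] at h3
    exact h3
  have hv_lb1 : ∀ (n : ℕ) (x : EuclideanSpace ℝ (Fin d)),
      ‖x‖ ≤ 2 * ((n : ℝ) + 1) → u x - c n ≤ g n x := by
    intro n x hx
    obtain ⟨z, hz, hzx⟩ := hscov n x hx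
    have h0 : u x - c n < a z x := hzx
    exact h0.le.trans (hg_ge n x z hz)
  have hv_lb2 : ∀ n x, u 0 - ‖x‖ ≤ g n x := by
    intro n x
    have h1 : a 0 x ≤ g n x := hg_ge n x 0 (hs0 n)
    have h2 : -(‖x‖) ≤ ⟪w 0, x - 0⟫ := by
      have h3 := abs_real_inner_le_norm (w 0) (x - 0)
      have h4 : ‖w 0‖ * ‖x - 0‖ ≤ ‖x‖ := by
        rw [sub_zero]
        exact mul_le_of_le_one_left (norm_nonneg x) (hw 0).1
      have h5 := neg_abs_le ⟪w 0, x - 0⟫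
      linarith [abs_le.mp h3]
    have : u 0 + ⟪w 0, x - 0⟫ ≤ g n x := by rw [ha_def] at h1; exact h1
    linarith
  -- smoothness
  have hg_smooth : ∀ n, ContDiff ℝ (⊤ : ℕ∞) (g n) := by
    intro n
    have hS : ContDiff ℝ (⊤ : ℕ∞) (fun x : EuclideanSpace ℝ (Fin d) =>
        ∑ z ∈ s n, Real.exp (L n * a z x)) := by
      apply ContDiff.sum
      intro z _
      apply Real.contDiff_exp.comp
      apply ContDiff.mul contDiff_const
      exact contDiff_const.add (ContDiff.inner ℝ contDiff_const
        (contDiff_id.sub contDiff_const))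
    have hlog : ContDiff ℝ (⊤ : ℕ∞) (fun x : EuclideanSpace ℝ (Fin d) =>
        Real.log (∑ z ∈ s n, Real.exp (L n * a z x))) := by
      rw [contDiff_iff_contDiffAt]
      intro x
      exact (Real.contDiffAt_log.mpr (hSpos n x).ne').comp x hS.contDiffAt
    exact contDiff_const.mul hlog
  -- convexity of g
  have hg_cvx : ∀ n, ConvexOn ℝ Set.univ (g n) := by
    intro n
    have hbase := aux_lse_convex (s n) ⟨0, hs0 n⟩
      (fun z => L n * u z - L n * ⟪w z, z⟫) (fun z => L n • w z)
    have hfun : (fun x : EuclideanSpace ℝ (Fin d) => Real.log (∑ z ∈ s n,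
        Real.exp ((L n * u z - L n * ⟪w z, z⟫) + ⟪L n • w z, x⟫)))
        = fun x => Real.log (∑ z ∈ s n, Real.exp (L n * a z x)) := by
      funext x
      congr 1
      apply Finset.sum_congr rfl
      intro z _
      congr 1
      rw [real_inner_smul_left, ha_def]
      dsimp only
      rw [inner_sub_right]
      ring
    rw [hfun] at hbase
    have h2 := hbase.smul (c := (L n)⁻¹) (inv_nonneg.mpr (hL_pos n).le)
    simpa [hg_def, smul_eq_mul] using h2
  -- the upper bound on the conjugate
  have hub : ∀ y ∈ Metric.ball (0 : EuclideanSpace ℝ (Fin d)) 1, ∀ n x,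
      ⟪x, y⟫ - (g n x + c n * ⟪x, x⟫)
        ≤ sSup {r : ℝ | ∃ x' : EuclideanSpace ℝ (Fin d), r = ⟪x', y⟫ - u x'} + c n := by
    intro y hy n x
    have hSbdd := hfin y hy
    rcases le_or_gt ‖x‖ (2 * ((n : ℝ) + 1)) with hx | hx
    · have h1 : u x - c n ≤ g n x := hv_lb1 n x hx
      have h2 : 0 ≤ c n * ⟪x, x⟫ := mul_nonneg (hc_pos n).le real_inner_self_nonneg
      have h3 : ⟪x, y⟫ - u x ≤ sSup {r : ℝ | ∃ x', r = ⟪x', y⟫ - u x'} :=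
        le_csSup hSbdd ⟨x, rfl⟩
      linarith
    · have h1 : u 0 - ‖x‖ ≤ g n x := hv_lb2 n x
      have h2 : ⟪x, y⟫ ≤ ‖x‖ * ‖y‖ := real_inner_le_norm x y
      have h3 : ‖y‖ ≤ 1 := (mem_ball_zero_iff.mp hy).le
      have h4 : c n * ⟪x, x⟫ = c n * ‖x‖ ^ 2 := by rw [real_inner_self_eq_norm_sq]
      have h5 : -u 0 ≤ sSup {r : ℝ | ∃ x', r = ⟪x', y⟫ - u x'} := by
        refine le_csSup hSbdd ⟨0, ?_⟩
        simp
      have h6 : 2 * ‖x‖ ≤ c n * ‖x‖ ^ 2 := by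
        rw [hc_def]
        have hn1 : (0:ℝ) < (n : ℝ) + 1 := by positivity
        have h7 : 0 ≤ ‖x‖ := norm_nonneg x
        rw [div_mul_eq_mul_div, le_div_iff₀ hn1]
        nlinarith
      have h7 : ‖x‖ * ‖y‖ ≤ ‖x‖ := mul_le_of_le_one_right (norm_nonneg x) h3
      have h8 : 0 < c n := hc_pos n
      linarith
  refine ⟨fun n x => g n x + c n * ⟪x, x⟫, ?_, ?_, ?_, ?_, ?_⟩
  · -- smoothness
    intro n
    exact (hg_smooth n).add (contDiff_const.mul (ContDiff.inner ℝ contDiff_id contDiff_id))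
  · -- convexity
    intro n
    have h2 := (aux_convexOn_inner (E := EuclideanSpace ℝ (Fin d))).smul
      (c := c n) (hc_pos n).le
    have h3 : ConvexOn ℝ Set.univ (fun x : EuclideanSpace ℝ (Fin d) => c n * ⟪x, x⟫) := by
      simpa [smul_eq_mul] using h2
    exact (hg_cvx n).add h3
  · -- Hessian
    intro n x ww hww
    exact aux_hessian_pos (hg_smooth n) (hg_cvx n) (hc_pos n) x ww hww
  · -- bounded above
    intro n y hy
    exact ⟨sSup {r : ℝ | ∃ x', r = ⟪x', y⟫ - u x'} + c n, fun r hr => by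
      obtain ⟨x, rfl⟩ := hr
      exact hub y hy n x⟩
  · -- convergence
    intro y hy
    have hSbdd := hfin y hy
    have hSne : Set.Nonempty {r : ℝ | ∃ x : EuclideanSpace ℝ (Fin d), r = ⟪x, y⟫ - u x} :=
      ⟨⟪(0 : EuclideanSpace ℝ (Fin d)), y⟫ - u 0, 0, rfl⟩
    rw [Metric.tendsto_atTop]
    intro ε hε
    obtain ⟨rr, hrrS, hrr⟩ := exists_lt_of_lt_csSup hSne
      (show sSup {r : ℝ | ∃ x : EuclideanSpace ℝ (Fin d), r = ⟪x, y⟫ - u x} - ε / 2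
        < sSup {r : ℝ | ∃ x : EuclideanSpace ℝ (Fin d), r = ⟪x, y⟫ - u x} by linarith)
    obtain ⟨x0, rfl⟩ := hrrS
    have hT1 : (1:ℝ) ≤ 1 + ⟪x0, x0⟫ := by
      linarith [real_inner_self_nonneg (F := EuclideanSpace ℝ (Fin d)) (x := x0)]
    have hTpos : (0:ℝ) < 1 + ⟪x0, x0⟫ := by linarith
    obtain ⟨N, hN⟩ := exists_nat_one_div_lt (show (0:ℝ) < ε / 2 / (1 + ⟪x0, x0⟫) by positivity)
    refine ⟨N, fun n hn => ?_⟩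
    have hδ : 1 / ((n:ℝ) + 1) ≤ 1 / ((N:ℝ) + 1) := by
      apply one_div_le_one_div_of_le (by positivity)
      have : (N:ℝ) ≤ (n:ℝ) := by exact_mod_cast hn
      linarith
    have hδT : (1 / ((n:ℝ) + 1)) * (1 + ⟪x0, x0⟫) < ε / 2 := by
      have h1 : (1 / ((n:ℝ) + 1)) * (1 + ⟪x0, x0⟫) ≤ (1 / ((N:ℝ) + 1)) * (1 + ⟪x0, x0⟫) :=
        mul_le_mul_of_nonneg_right hδ (by linarith)
      have h2 : (1 / ((N:ℝ) + 1)) * (1 + ⟪x0, x0⟫) < (ε / 2 / (1 + ⟪x0, x0⟫)) * (1 + ⟪x0, x0⟫) :=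
        mul_lt_mul_of_pos_right hN hTpos
      have h3 : (ε / 2 / (1 + ⟪x0, x0⟫)) * (1 + ⟪x0, x0⟫) = ε / 2 :=
        div_mul_cancel₀ _ hTpos.ne'
      linarith
    have hδ2 : c n < ε / 2 := by
      rw [hc_def]
      nlinarith [hδT, hT1, (show (0:ℝ) < 1/((n:ℝ)+1) by positivity)]
    have hbddn : BddAbove {r : ℝ | ∃ x : EuclideanSpace ℝ (Fin d),
        r = ⟪x, y⟫ - (g n x + c n * ⟪x, x⟫)} :=
      ⟨sSup {r : ℝ | ∃ x', r = ⟪x', y⟫ - u x'} + c n, fun r hr => by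
        obtain ⟨x, rfl⟩ := hr
        exact hub y hy n x⟩
    have hnen : Set.Nonempty {r : ℝ | ∃ x : EuclideanSpace ℝ (Fin d),
        r = ⟪x, y⟫ - (g n x + c n * ⟪x, x⟫)} := ⟨_, ⟨0, rfl⟩⟩
    rw [Real.dist_eq, abs_lt]
    constructor
    · -- lower bound: sSup S - ε < sSup Sn
      have h1 : ⟪x0, y⟫ - (g n x0 + c n * ⟪x0, x0⟫)
          ≤ sSup {r : ℝ | ∃ x, r = ⟪x, y⟫ - (g n x + c n * ⟪x, x⟫)} :=
        le_csSup hbddn ⟨x0, rfl⟩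
      have h2 : g n x0 ≤ u x0 + c n := hg_le n x0
      have h4 : c n * ⟪x0, x0⟫ + c n = c n * (1 + ⟪x0, x0⟫) := by ring
      have h5 : c n * (1 + ⟪x0, x0⟫) < ε / 2 := by
        rw [hc_def]
        exact hδT
      linarith
    · -- upper bound: sSup Sn < sSup S + ε
      have h1 : sSup {r : ℝ | ∃ x, r = ⟪x, y⟫ - (g n x + c n * ⟪x, x⟫)}
          ≤ sSup {r : ℝ | ∃ x', r = ⟪x', y⟫ - u x'} + c n := by
        apply csSup_le hnen
        intro r hr
        obtain ⟨x, rfl⟩ := hr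
        exact hub y hy n x
      linarith
end

section
/- Let n ≥ 2, let u be a unit vector of the Euclidean space ℝ^n, and let R = { x ∈ ℝ^n : ⟨x, u⟩ = 0 } be the hyperplane orthogonal to u. Let D ⊆ R be compact, convex, with nonempty interior relative to R. Let C₀ and C₁ be nonempty compact convex subsets of the half-space { x : ⟨x, u⟩ ≥ 0 } whose orthogonal projections onto R are both equal to D. Then for every λ ∈ [0, 1], vol((1 − λ)•C₀ + λ•C₁) ≥ (1 − λ)·vol(C₀) + λ·vol(C₁). (The volume is concave, in fact affine-dominated, on this 'canal class' of convex bodies.) -/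
/-!
Write points of `ℝⁿ` as `t • u + y` with `y ⊥ u`, so that volume becomes the product of length
along `u` and volume on `u^⊥`. Equal projections mean that `C₀` and `C₁` have nonempty fibres
over the same points `y`. Over such a `y` the fibre of `(1 - λ) • C₀ + λ • C₁` contains the
corresponding combination of the two fibres, whose length is at least the combination of their
lengths by the one-dimensional Brunn–Minkowski inequality; integrating over `u^⊥` gives the claim.
-/

open MeasureTheory Set
open scoped Pointwise RealInnerProductSpace

namespace Real

theorem volume_add_volume_le_volume_add {I J : Set ℝ} (hI : IsCompact I) (hJ : IsCompact J)
    (hI₀ : I.Nonempty) (hJ₀ : J.Nonempty) : volume I + volume J ≤ volume (I + J) := by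
  set a := sInf I
  set b := sSup J
  -- `{a} + J` and `I + {b}` are translates of `J` and `I` inside `I + J` meeting only at `a + b`.
  have hinter : ({a} + J) ∩ (I + {b}) ⊆ {a + b} := by
    rintro _ ⟨⟨_, rfl, j, hj, rfl⟩, ⟨i, hi, _, rfl, hij⟩⟩
    have hjb : j ≤ b := le_csSup hJ.bddAbove hj
    have hai : a ≤ i := csInf_le hI.bddBelow hi
    exact mem_singleton_iff.2 (by linarith)
  calc volume I + volume J = volume ({a} + J) + volume (I + {b}) := by
        rw [singleton_add, add_singleton, image_add_left, image_add_right,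
          measure_preimage_add, measure_preimage_add_right, add_comm]
    _ = volume (({a} + J) ∪ (I + {b})) + volume (({a} + J) ∩ (I + {b})) :=
        (measure_union_add_inter _ (hI.add isCompact_singleton).measurableSet).symm
    _ ≤ volume (I + J) + 0 := by
        gcongr
        · exact union_subset (add_subset_add_right (singleton_subset_iff.2 (hI.sInf_mem hI₀)))
            (add_subset_add_left (singleton_subset_iff.2 (hJ.sSup_mem hJ₀)))
        · exact (measure_mono hinter).trans (measure_singleton _).le
    _ = volume (I + J) := add_zero _

theorem ofReal_mul_volume_add_ofReal_mul_volume_le {I J : Set ℝ} (hI : IsCompact I)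
    (hJ : IsCompact J) (hI₀ : I.Nonempty) (hJ₀ : J.Nonempty) {a b : ℝ} (ha : 0 ≤ a) (hb : 0 ≤ b) :
    ENNReal.ofReal a * volume I + ENNReal.ofReal b * volume J ≤ volume (a • I + b • J) := by
  simpa [Measure.addHaar_smul_of_nonneg volume ha, Measure.addHaar_smul_of_nonneg volume hb] using
    volume_add_volume_le_volume_add (hI.smul a) (hJ.smul b) (hI₀.smul_set) (hJ₀.smul_set)

end Real

theorem IsCompact.preimage_prodMk_right {X Y : Type*} [TopologicalSpace X] [TopologicalSpace Y]
    [T1Space Y] {A : Set (X × Y)} (hA : IsCompact A) (y : Y) : IsCompact ((·, y) ⁻¹' A) :=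
  (Topology.IsClosedEmbedding.of_isEmbedding_isClosedMap (isEmbedding_prodMkLeft y)
    (isClosedMap_prodMk_right y)).isProperMap.isCompact_preimage hA

theorem nonempty_preimage_prodMk_right_iff {X Y : Type*} {A : Set (X × Y)} {y : Y} :
    ((·, y) ⁻¹' A).Nonempty ↔ y ∈ Prod.snd '' A := by
  refine ⟨fun ⟨t, ht⟩ => ⟨_, ht, rfl⟩, ?_⟩
  rintro ⟨p, hp, rfl⟩
  exact ⟨p.1, hp⟩

theorem smul_preimage_prodMk_right_add_subset {Y : Type*} [AddCommGroup Y] [Module ℝ Y]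
    (A B : Set (ℝ × Y)) (y : Y) {a b : ℝ} (hab : a + b = 1) :
    a • (·, y) ⁻¹' A + b • (·, y) ⁻¹' B ⊆ (·, y) ⁻¹' (a • A + b • B) := by
  rintro _ ⟨_, ⟨s, hs, rfl⟩, _, ⟨t, ht, rfl⟩, rfl⟩
  have hcomb : ((a • s + b • t, y) : ℝ × Y) = a • (s, y) + b • (t, y) := by
    ext <;> simp [← add_smul, hab]
  change (a • s + b • t, y) ∈ a • A + b • B
  rw [hcomb]
  exact add_mem_add (smul_mem_smul_set hs) (smul_mem_smul_set ht)

theorem ofReal_mul_volume_preimage_add_le {Y : Type*} [AddCommGroup Y] [Module ℝ Y]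
    [TopologicalSpace Y] [T1Space Y] {A₀ A₁ : Set (ℝ × Y)}
    (h₀ : IsCompact A₀) (h₁ : IsCompact A₁) (hproj : Prod.snd '' A₀ = Prod.snd '' A₁)
    {a b : ℝ} (ha : 0 ≤ a) (hb : 0 ≤ b) (hab : a + b = 1) (y : Y) :
    ENNReal.ofReal a * volume ((·, y) ⁻¹' A₀) + ENNReal.ofReal b * volume ((·, y) ⁻¹' A₁)
      ≤ volume ((·, y) ⁻¹' (a • A₀ + b • A₁)) := by
  by_cases hy : y ∈ Prod.snd '' A₀
  · exact (Real.ofReal_mul_volume_add_ofReal_mul_volume_le (h₀.preimage_prodMk_right y)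
      (h₁.preimage_prodMk_right y) (nonempty_preimage_prodMk_right_iff.2 hy)
      (nonempty_preimage_prodMk_right_iff.2 (hproj ▸ hy)) ha hb).trans
      (measure_mono (smul_preimage_prodMk_right_add_subset A₀ A₁ y hab))
  · have h₀y := not_nonempty_iff_eq_empty.1 (mt nonempty_preimage_prodMk_right_iff.1 hy)
    have h₁y := not_nonempty_iff_eq_empty.1 (mt nonempty_preimage_prodMk_right_iff.1 (hproj ▸ hy))
    simp [h₀y, h₁y]

theorem ofReal_mul_prod_add_ofReal_mul_prod_le {Y : Type*} [AddCommGroup Y] [Module ℝ Y]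
    [TopologicalSpace Y] [ContinuousAdd Y] [ContinuousSMul ℝ Y] [T2Space Y]
    [SecondCountableTopology Y] [MeasurableSpace Y] [BorelSpace Y] (ν : Measure Y) [SFinite ν]
    {A₀ A₁ : Set (ℝ × Y)} (h₀ : IsCompact A₀) (h₁ : IsCompact A₁)
    (hproj : Prod.snd '' A₀ = Prod.snd '' A₁) {a b : ℝ} (ha : 0 ≤ a) (hb : 0 ≤ b)
    (hab : a + b = 1) :
    ENNReal.ofReal a * volume.prod ν A₀ + ENNReal.ofReal b * volume.prod ν A₁
      ≤ volume.prod ν (a • A₀ + b • A₁) := by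
  have hm₀ := h₀.measurableSet
  have hm₁ := h₁.measurableSet
  rw [Measure.prod_apply_symm hm₀, Measure.prod_apply_symm hm₁,
    Measure.prod_apply_symm ((h₀.smul a).add (h₁.smul b)).measurableSet,
    ← lintegral_const_mul _ (measurable_measure_prodMk_right hm₀),
    ← lintegral_const_mul _ (measurable_measure_prodMk_right hm₁),
    ← lintegral_add_left ((measurable_measure_prodMk_right hm₀).const_mul _)]
  exact lintegral_mono (ofReal_mul_volume_preimage_add_le h₀ h₁ hproj ha hb hab)

theorem exists_measurePreserving_prod_orthogonal {E : Type*} [NormedAddCommGroup E]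
    [InnerProductSpace ℝ E] [FiniteDimensional ℝ E] [MeasurableSpace E] [BorelSpace E]
    (u : E) (hu : ‖u‖ = 1) :
    ∃ Φ : E ≃L[ℝ] ℝ × (ℝ ∙ u)ᗮ, MeasurePreserving Φ ∧ ∀ x, ((Φ x).2 : E) = x - ⟪x, u⟫ • u := by
  set K := ℝ ∙ u
  let e := (LinearIsometryEquiv.toSpanUnitSingleton (𝕜 := ℝ) u hu).symm
  refine ⟨K.orthogonalDecomposition.toContinuousLinearEquiv.trans
    ((WithLp.prodContinuousLinearEquiv 2 ℝ K Kᗮ).trans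
      (e.toContinuousLinearEquiv.prodCongr (ContinuousLinearEquiv.refl ℝ Kᗮ))), ?_, fun x => ?_⟩
  · exact (e.measurePreserving.prod (MeasurePreserving.id volume)).comp
      ((WithLp.volume_preserving_ofLp K Kᗮ).comp K.orthogonalDecomposition.measurePreserving)
  · simp [K, Submodule.starProjection_unit_singleton ℝ hu, real_inner_comm]

theorem ofReal_mul_volume_add_ofReal_mul_volume_le_of_image_eq {E : Type*} [NormedAddCommGroup E]
    [InnerProductSpace ℝ E] [FiniteDimensional ℝ E] [MeasurableSpace E] [BorelSpace E]
    {u : E} (hu : ‖u‖ = 1) {C₀ C₁ : Set E} (h₀ : IsCompact C₀) (h₁ : IsCompact C₁)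
    (hproj : (fun x => x - ⟪x, u⟫ • u) '' C₀ = (fun x => x - ⟪x, u⟫ • u) '' C₁)
    {a b : ℝ} (ha : 0 ≤ a) (hb : 0 ≤ b) (hab : a + b = 1) :
    ENNReal.ofReal a * volume C₀ + ENNReal.ofReal b * volume C₁ ≤ volume (a • C₀ + b • C₁) := by
  obtain ⟨Φ, hΦ, hΦsnd⟩ := exists_measurePreserving_prod_orthogonal u hu
  have hvol (C : Set E) : volume (Φ '' C) = volume C := by
    rw [← hΦ.measure_preimage_emb Φ.toHomeomorph.measurableEmbedding,
      Φ.injective.preimage_image]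
  have hshadow : Prod.snd '' (Φ '' C₀) = Prod.snd '' (Φ '' C₁) := by
    refine Subtype.val_injective.image_injective ?_
    simpa only [image_image, hΦsnd] using hproj
  rw [← hvol C₀, ← hvol C₁, ← hvol, image_add, image_smul_set, image_smul_set]
  exact ofReal_mul_prod_add_ofReal_mul_prod_le volume (h₀.image Φ.continuous)
    (h₁.image Φ.continuous) hshadow ha hb hab

theorem stmt12_general (n : ℕ) (u : EuclideanSpace ℝ (Fin n)) (hu : ‖u‖ = 1)
    (D : Set (EuclideanSpace ℝ (Fin n)))
    (C₀ C₁ : Set (EuclideanSpace ℝ (Fin n)))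
    (h0cp : IsCompact C₀) (h1cp : IsCompact C₁)
    (h0proj : (fun x : EuclideanSpace ℝ (Fin n) => x - ⟪x, u⟫ • u) '' C₀ = D)
    (h1proj : (fun x : EuclideanSpace ℝ (Fin n) => x - ⟪x, u⟫ • u) '' C₁ = D)
    (l : ℝ) (hl0 : 0 ≤ l) (hl1 : l ≤ 1) :
    ENNReal.ofReal (1 - l) * volume C₀ + ENNReal.ofReal l * volume C₁
      ≤ volume ((1 - l) • C₀ + l • C₁) :=
  ofReal_mul_volume_add_ofReal_mul_volume_le_of_image_eq hu h0cp h1cp (h0proj.trans h1proj.symm)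
    (sub_nonneg.2 hl1) hl0 (sub_add_cancel 1 l)

/-- Let `u` be a unit vector of `ℝ^n` (`n ≥ 2`), `R = u^⊥`, and
`D ⊆ R` compact convex with nonempty interior relative to `R`.  If `C₀, C₁` are nonempty
compact convex subsets of the half-space `{x : ⟨x, u⟩ ≥ 0}` whose orthogonal projections
onto `R` both equal `D`, then for every `λ ∈ [0, 1]`,
`vol((1 − λ)•C₀ + λ•C₁) ≥ (1 − λ)·vol C₀ + λ·vol C₁`. -/
theorem stmt12 (n : ℕ) (hn : 2 ≤ n) (u : EuclideanSpace ℝ (Fin n)) (hu : ‖u‖ = 1)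
    (D : Set (EuclideanSpace ℝ (Fin n))) (hDcp : IsCompact D) (hDcv : Convex ℝ D)
    (hDR : D ⊆ {x : EuclideanSpace ℝ (Fin n) | ⟪x, u⟫ = 0})
    (hDint : ∃ x ∈ D, ∃ ε > (0 : ℝ), ∀ y : EuclideanSpace ℝ (Fin n),
        ⟪y, u⟫ = 0 → ‖y - x‖ < ε → y ∈ D)
    (C₀ C₁ : Set (EuclideanSpace ℝ (Fin n)))
    (h0ne : C₀.Nonempty) (h1ne : C₁.Nonempty)
    (h0cp : IsCompact C₀) (h1cp : IsCompact C₁)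
    (h0cv : Convex ℝ C₀) (h1cv : Convex ℝ C₁)
    (h0side : C₀ ⊆ {x : EuclideanSpace ℝ (Fin n) | 0 ≤ ⟪x, u⟫})
    (h1side : C₁ ⊆ {x : EuclideanSpace ℝ (Fin n) | 0 ≤ ⟪x, u⟫})
    (h0proj : (fun x : EuclideanSpace ℝ (Fin n) => x - ⟪x, u⟫ • u) '' C₀ = D)
    (h1proj : (fun x : EuclideanSpace ℝ (Fin n) => x - ⟪x, u⟫ • u) '' C₁ = D)
    (l : ℝ) (hl0 : 0 ≤ l) (hl1 : l ≤ 1) :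
    ENNReal.ofReal (1 - l) * volume C₀ + ENNReal.ofReal l * volume C₁
      ≤ volume ((1 - l) • C₀ + l • C₁) :=
  stmt12_general n u hu D C₀ C₁ h0cp h1cp h0proj h1proj l hl0 hl1
end

section
/- Let O ⊆ ℝ^d be open, let (u_n) be a sequence of convex functions u_n : O → ℝ converging to a function u : O → ℝ uniformly on every compact subset of O. Let K and K' be compact subsets of O with K contained in the interior of K'. If u is L-Lipschitz on K' for some L ≥ 0, then for every ε > 0 there exists N such that for every n ≥ N the function u_n is (L + ε)-Lipschitz on K. Consequently limsup_n ‖u_n‖_{Lip(K)} ≤ ‖u‖_{Lip(K')}. -/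
open Filter Metric

/-! Fix `δ > 0` with `cthickening δ K ⊆ interior K'`. For `x, y ∈ K`, push `y` a distance `δ`
further along the ray from `x` to a point `z ∈ K'`. Convexity bounds the slope of `u_n` on
`[x, y]` by its slope on `[x, z]`, and once `u_n` is `η`-close to `f` on `K'` the latter is at most
`L + 2η / (‖y - x‖ + δ) ≤ L + 2η / δ`, which is `L + ε` for `η = εδ / 2`. -/

variable {E : Type*} [NormedAddCommGroup E] [NormedSpace ℝ E]

theorem ConvexOn.sub_le_mul_sub {s : Set E} {g : E → ℝ} (hg : ConvexOn ℝ s g) {x z : E}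
    (hx : x ∈ s) (hz : z ∈ s) {θ : ℝ} (hθ₀ : 0 ≤ θ) (hθ₁ : θ ≤ 1) :
    g (x + θ • (z - x)) - g x ≤ θ * (g z - g x) := by
  have hcomb : (1 - θ) • x + θ • z = x + θ • (z - x) := by
    rw [sub_smul, one_smul, smul_sub]; abel
  have := hg.2 hx hz (sub_nonneg.2 hθ₁) hθ₀ (sub_add_cancel 1 θ)
  rw [hcomb, smul_eq_mul, smul_eq_mul] at this
  linarith

section NearLipschitz

variable {s t K : Set E} {f g : E → ℝ} {L η δ : ℝ}

theorem ConvexOn.sub_le_of_abs_sub_le (hg : ConvexOn ℝ s g) (hts : t ⊆ s) (hδ : 0 < δ)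
    (hball : ∀ y ∈ K, closedBall y δ ⊆ t)
    (hf : ∀ a ∈ t, ∀ b ∈ t, |f a - f b| ≤ L * ‖a - b‖) (hgf : ∀ a ∈ t, |g a - f a| ≤ η)
    {x y : E} (hx : x ∈ t) (hy : y ∈ K) :
    g y - g x ≤ (L + 2 * η / δ) * ‖y - x‖ := by
  rcases eq_or_ne y x with rfl | hne
  · simp
  set r := ‖y - x‖
  have hr : 0 < r := norm_pos_iff.2 (sub_ne_zero.2 hne)
  set z := y + (δ / r) • (y - x)
  have hzt : z ∈ t := by
    refine hball y hy ?_
    rw [mem_closedBall, dist_eq_norm, add_sub_cancel_left, norm_smul, Real.norm_of_nonneg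
      (by positivity), div_mul_cancel₀ _ hr.ne']
  have hzx : z - x = ((r + δ) / r) • (y - x) := by
    rw [add_div, div_self hr.ne', add_smul, one_smul, add_sub_right_comm]
  have hnorm_zx : ‖z - x‖ = r + δ := by
    rw [hzx, norm_smul, Real.norm_of_nonneg (by positivity), div_mul_cancel₀ _ hr.ne']
  have hy_eq : x + (r / (r + δ)) • (z - x) = y := by
    rw [hzx, smul_smul, div_mul_div_cancel₀ (by positivity : r + δ ≠ 0), div_self hr.ne',
      one_smul, add_sub_cancel]
  have hη : 0 ≤ η := (abs_nonneg _).trans (hgf x hx)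
  have hgzx : g z - g x ≤ L * (r + δ) + 2 * η := by
    have hfzx := (abs_le.1 (hf z hzt x hx)).2
    rw [hnorm_zx] at hfzx
    linarith [(abs_le.1 (hgf z hzt)).2, (abs_le.1 (hgf x hx)).1]
  calc g y - g x = g (x + (r / (r + δ)) • (z - x)) - g x := by rw [hy_eq]
    _ ≤ r / (r + δ) * (g z - g x) :=
        hg.sub_le_mul_sub (hts hx) (hts hzt) (by positivity)
          (div_le_one_of_le₀ (by linarith) (by positivity))
    _ ≤ r / (r + δ) * (L * (r + δ) + 2 * η) := by gcongr
    _ = (L + 2 * η / (r + δ)) * r := by field_simp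
    _ ≤ (L + 2 * η / δ) * r := by gcongr; linarith

theorem ConvexOn.abs_sub_le_of_abs_sub_le (hg : ConvexOn ℝ s g) (hts : t ⊆ s) (hδ : 0 < δ)
    (hball : ∀ y ∈ K, closedBall y δ ⊆ t)
    (hf : ∀ a ∈ t, ∀ b ∈ t, |f a - f b| ≤ L * ‖a - b‖) (hgf : ∀ a ∈ t, |g a - f a| ≤ η)
    {x y : E} (hx : x ∈ K) (hy : y ∈ K) :
    |g x - g y| ≤ (L + 2 * η / δ) * ‖x - y‖ := by
  have hKt : ∀ {a}, a ∈ K → a ∈ t := fun {a} ha => hball a ha (mem_closedBall_self hδ.le)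
  rw [abs_sub_le_iff]
  exact ⟨hg.sub_le_of_abs_sub_le hts hδ hball hf hgf (hKt hy) hx,
    norm_sub_rev x y ▸ hg.sub_le_of_abs_sub_le hts hδ hball hf hgf (hKt hx) hy⟩

end NearLipschitz

theorem stmt16_general (d : ℕ) (O : Set (EuclideanSpace ℝ (Fin d)))
    (u : ℕ → EuclideanSpace ℝ (Fin d) → ℝ) (f : EuclideanSpace ℝ (Fin d) → ℝ)
    (hconv : ∀ n, ConvexOn ℝ O (u n))
    (hunif : ∀ C : Set (EuclideanSpace ℝ (Fin d)), C ⊆ O → IsCompact C →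
        TendstoUniformlyOn u f atTop C)
    (K K' : Set (EuclideanSpace ℝ (Fin d))) (hK : IsCompact K) (hK' : IsCompact K')
    (hKK' : K ⊆ interior K') (hK'O : K' ⊆ O)
    (L : ℝ) (hLip : ∀ x ∈ K', ∀ y ∈ K', |f x - f y| ≤ L * ‖x - y‖)
    (ε : ℝ) (hε : 0 < ε) :
    ∃ N : ℕ, ∀ n ≥ N, ∀ x ∈ K, ∀ y ∈ K, |u n x - u n y| ≤ (L + ε) * ‖x - y‖ := by
  obtain ⟨δ, hδ, hKδ⟩ := hK.exists_cthickening_subset_open isOpen_interior hKK'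
  have hball : ∀ y ∈ K, closedBall y δ ⊆ K' := fun y hy =>
    (closedBall_subset_cthickening hy δ).trans (hKδ.trans interior_subset)
  obtain ⟨N, hN⟩ := eventually_atTop.1 <|
    Metric.tendstoUniformlyOn_iff.1 (hunif K' hK'O hK') (ε * δ / 2) (by positivity)
  refine ⟨N, fun n hn x hx y hy => ?_⟩
  have hclose : ∀ a ∈ K', |u n a - f a| ≤ ε * δ / 2 := fun a ha => by
    rw [abs_sub_comm, ← Real.dist_eq]; exact (hN n hn a ha).le
  have hslope : L + 2 * (ε * δ / 2) / δ = L + ε := by field_simp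
  simpa only [hslope] using (hconv n).abs_sub_le_of_abs_sub_le hK'O hδ hball hLip hclose hx hy

/-- Let `O ⊆ ℝ^d` be open, and let `(u_n)` be a sequence of convex
functions on `O` converging uniformly on every compact subset of `O` to `f`.  Let `K, K'`
be compact subsets of `O` with `K` contained in the interior of `K'`.  If `f` is
`L`-Lipschitz on `K'`, then for every `ε > 0`, for all sufficiently large `n` the
function `u_n` is `(L + ε)`-Lipschitz on `K`.  (Consequently
`limsup ‖u_n‖_{Lip(K)} ≤ ‖f‖_{Lip(K')}`.) -/
theorem stmt16 (d : ℕ) (O : Set (EuclideanSpace ℝ (Fin d))) (hO : IsOpen O)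
    (u : ℕ → EuclideanSpace ℝ (Fin d) → ℝ) (f : EuclideanSpace ℝ (Fin d) → ℝ)
    (hconv : ∀ n, ConvexOn ℝ O (u n))
    (hunif : ∀ C : Set (EuclideanSpace ℝ (Fin d)), C ⊆ O → IsCompact C →
        TendstoUniformlyOn u f atTop C)
    (K K' : Set (EuclideanSpace ℝ (Fin d))) (hK : IsCompact K) (hK' : IsCompact K')
    (hKK' : K ⊆ interior K') (hK'O : K' ⊆ O)
    (L : ℝ) (hL : 0 ≤ L)
    (hLip : ∀ x ∈ K', ∀ y ∈ K', |f x - f y| ≤ L * ‖x - y‖)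
    (ε : ℝ) (hε : 0 < ε) :
    ∃ N : ℕ, ∀ n ≥ N, ∀ x ∈ K, ∀ y ∈ K, |u n x - u n y| ≤ (L + ε) * ‖x - y‖ :=
  stmt16_general d O u f hconv hunif K K' hK hK' hKK' hK'O L hLip ε hε
end

section
/- Let d ≥ 1, let B̄ and S^{d−1} denote the closed unit ball and the unit sphere of ℝ^d, and let h : B̄ → ℝ be continuous and convex; set g = h restricted to S^{d−1}. Then L(∂h(B)) = 0 (i.e. the Monge–Ampère measure of h on the open ball B vanishes) if and only if h is the convex envelope of g, that is, h(x) = sup { a(x) : a : ℝ^d → ℝ affine and a(ℓ) ≤ g(ℓ) for all ℓ ∈ S^{d−1} } for every x ∈ B̄. -/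
/-!
If `h` is the convex envelope of its boundary values and `p ∈ ∂h(x)` with `|x| < 1`, let `z`
minimize `h - ⟪p, ·⟫` over the sphere. Then `⟪p, ·⟫ + (h z - ⟪p, z⟫)` is an affine minorant of
`h` on the sphere, so it stays below `h` at `x`: both `x` and `z` maximize `⟪p, ·⟫ - h` over the
closed ball. The Legendre transform `h*(p) = sup_{|y| ≤ 1} (⟪p, y⟫ - h y)` is `1`-Lipschitz and
its gradient at `p`, where it exists, is the (then unique) maximizer; so `∂h(B)` lies in the set
where `h*` is not differentiable, which is null by Rademacher's theorem.

Conversely, if an affine `a = ⟪v, ·⟫ + β ≤ h` on the sphere has `a x > h x`, then for every `w`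
close to `v` the minimum of `h - ⟪w, ·⟫` over the closed ball is attained inside the open ball, so
`∂h(B)` contains a ball around `v`. The inequality `h ≤ envelope` is Hahn–Banach separation from
the epigraph of `h`.
-/

open scoped RealInnerProductSpace
open MeasureTheory

open Metric Set

section InnerProductSpace

variable {E : Type*} [NormedAddCommGroup E] [InnerProductSpace ℝ E]

/-- `sSup (affineMinorantValues S g x)` is the convex envelope of `g|_S` evaluated at `x`. -/
def affineMinorantValues (S : Set E) (g : E → ℝ) (x : E) : Set ℝ :=
  {y | ∃ v : E, ∃ β : ℝ, (∀ ℓ ∈ S, ⟪v, ℓ⟫ + β ≤ g ℓ) ∧ y = ⟪v, x⟫ + β}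

theorem bddAbove_affineMinorantValues {S : Set E} {g : E → ℝ} (hg : BddAbove (g '' S))
    {x : E} (hx : x ∈ convexHull ℝ S) : BddAbove (affineMinorantValues S g x) := by
  obtain ⟨M, hM⟩ := hg
  refine ⟨M, ?_⟩
  rintro _ ⟨v, β, hvβ, rfl⟩
  have hS : S ⊆ {z | ⟪v, z⟫ ≤ M - β} := fun ℓ hℓ ↦
    show ⟪v, ℓ⟫ ≤ M - β by linarith [hvβ ℓ hℓ, hM (mem_image_of_mem g hℓ)]
  have hx' : ⟪v, x⟫ ≤ M - β :=
    convexHull_min hS (convex_halfSpace_le (innerₛₗ ℝ v).isLinear _) hx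
  linarith

theorem exists_inner_add_le_of_lt [CompleteSpace E] {s : Set E} {g : E → ℝ} (hs : IsClosed s)
    (hg : LowerSemicontinuousOn g s) (hconv : ConvexOn ℝ s g) {x : E} (hx : x ∈ s) {a : ℝ}
    (ha : a < g x) : ∃ v : E, ∃ β : ℝ, (∀ y ∈ s, ⟪v, y⟫ + β ≤ g y) ∧ ⟪v, x⟫ + β = a := by
  obtain ⟨l, c, hle, heq⟩ := hconv.exists_affine_le_of_lt (𝕜 := ℝ) hx ha hs hg
  refine ⟨(InnerProductSpace.toDual ℝ E).symm l, c, fun y hy ↦ ?_, ?_⟩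
  · simpa [InnerProductSpace.toDual_symm_apply] using hle ⟨y, hy⟩
  · simpa [InnerProductSpace.toDual_symm_apply] using heq

theorem exists_mem_affineMinorantValues_gt [CompleteSpace E] {s S : Set E} {g : E → ℝ}
    (hs : IsClosed s) (hSs : S ⊆ s) (hg : LowerSemicontinuousOn g s) (hconv : ConvexOn ℝ s g)
    {x : E} (hx : x ∈ s) {a : ℝ} (ha : a < g x) :
    ∃ b ∈ affineMinorantValues S g x, a < b := by
  obtain ⟨b, hab, hbx⟩ := exists_between ha
  obtain ⟨v, β, hvβ, rfl⟩ := exists_inner_add_le_of_lt hs hg hconv hx hbx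
  exact ⟨_, ⟨v, β, fun ℓ hℓ ↦ hvβ ℓ (hSs hℓ), rfl⟩, hab⟩

theorem abs_real_inner_le_of_mem_closedBall (u : E) {z : E} {r : ℝ} (hz : z ∈ closedBall 0 r) :
    |⟪u, z⟫| ≤ ‖u‖ * r :=
  (abs_real_inner_le_norm u z).trans
    (mul_le_mul_of_nonneg_left (mem_closedBall_zero_iff.mp hz) (norm_nonneg u))

noncomputable def conjugateOn (K : Set E) (f : E → ℝ) (p : E) : ℝ :=
  sSup ((fun y ↦ ⟪p, y⟫ - f y) '' K)

variable {K : Set E} {f : E → ℝ}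

theorem le_conjugateOn (hK : IsCompact K) (hf : ContinuousOn f K) (p : E) {y : E}
    (hy : y ∈ K) : ⟪p, y⟫ - f y ≤ conjugateOn K f p :=
  le_csSup ((hK.image_of_continuousOn
    ((continuous_const.inner continuous_id).continuousOn.sub hf)).bddAbove)
    (mem_image_of_mem _ hy)

theorem conjugateOn_eq_of_isMinOn {p y : E} (hy : y ∈ K)
    (hmin : IsMinOn (fun z ↦ f z - ⟪p, z⟫) K y) : conjugateOn K f p = ⟪p, y⟫ - f y := by
  refine IsGreatest.csSup_eq ⟨mem_image_of_mem _ hy, ?_⟩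
  rintro _ ⟨z, hz, rfl⟩
  have := isMinOn_iff.mp hmin z hz
  dsimp only at this ⊢
  linarith

theorem lipschitzWith_conjugateOn (hK : IsCompact K) (hne : K.Nonempty) (hf : ContinuousOn f K)
    {r : NNReal} (hKr : K ⊆ closedBall 0 r) : LipschitzWith r (conjugateOn K f) := by
  refine LipschitzWith.of_le_add_mul r fun p q ↦ csSup_le (hne.image _) ?_
  rintro _ ⟨y, hy, rfl⟩
  have hpq : ⟪p - q, y⟫ ≤ ‖p - q‖ * r :=
    (le_abs_self _).trans (abs_real_inner_le_of_mem_closedBall _ (hKr hy))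
  rw [inner_sub_left] at hpq
  rw [dist_eq_norm]
  dsimp only
  linarith [le_conjugateOn hK hf q hy]

theorem fderiv_conjugateOn_eq (hK : IsCompact K) (hf : ContinuousOn f K) {p y : E} (hy : y ∈ K)
    (hmin : IsMinOn (fun z ↦ f z - ⟪p, z⟫) K y)
    (hd : DifferentiableAt ℝ (conjugateOn K f) p) :
    fderiv ℝ (conjugateOn K f) p = innerSL ℝ y := by
  have hlocmin : IsLocalMin (fun q ↦ conjugateOn K f q - innerSL ℝ y q) p :=
    Filter.Eventually.of_forall fun q ↦ by
      have := le_conjugateOn hK hf q hy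
      simp only [conjugateOn_eq_of_isMinOn hy hmin, innerSL_apply_apply, real_inner_comm _ y]
      linarith
  exact sub_eq_zero.mp (hlocmin.hasFDerivAt_eq_zero (hd.hasFDerivAt.sub (innerSL ℝ y).hasFDerivAt))

theorem not_differentiableAt_conjugateOn (hK : IsCompact K) (hf : ContinuousOn f K) {p y z : E}
    (hy : y ∈ K) (hz : z ∈ K) (hminy : IsMinOn (fun w ↦ f w - ⟪p, w⟫) K y)
    (hminz : IsMinOn (fun w ↦ f w - ⟪p, w⟫) K z) (hyz : y ≠ z) :
    ¬DifferentiableAt ℝ (conjugateOn K f) p := fun hd ↦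
  hyz <| innerSL_inj.mp <|
    (fderiv_conjugateOn_eq hK hf hy hminy hd).symm.trans (fderiv_conjugateOn_eq hK hf hz hminz hd)

end InnerProductSpace

section Subdifferential

variable {d : ℕ} {f : EuclideanSpace ℝ (Fin d) → ℝ}

theorem mem_subdiff_iff_isMinOn {O : Set (EuclideanSpace ℝ (Fin d))}
    {x p : EuclideanSpace ℝ (Fin d)} :
    p ∈ subdiff O f x ↔ IsMinOn (fun y ↦ f y - ⟪p, y⟫) O x := by
  rw [isMinOn_iff]
  exact forall₂_congr fun y _ ↦ by rw [inner_sub_right]; constructor <;> intro h <;> linarith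

theorem ConvexOn.mem_subdiff_of_mem_subdiff_interior {s : Set (EuclideanSpace ℝ (Fin d))}
    (hf : ConvexOn ℝ s f) {x p : EuclideanSpace ℝ (Fin d)} (hx : x ∈ interior s)
    (hp : p ∈ subdiff (interior s) f x) : p ∈ subdiff s f x := by
  intro y hy
  have hmid := hp _ (hf.1.combo_interior_self_mem_interior hx hy (a := 1 / 2) (b := 1 / 2)
    (by norm_num) (by norm_num) (by norm_num))
  have hconv := hf.2 (interior_subset hx) hy (by norm_num : (0 : ℝ) ≤ 1 / 2)
    (by norm_num : (0 : ℝ) ≤ 1 / 2) (by norm_num)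
  have hsub : (1 / 2 : ℝ) • x + (1 / 2 : ℝ) • y - x = (1 / 2 : ℝ) • (y - x) := by module
  rw [hsub, real_inner_smul_right] at hmid
  rw [smul_eq_mul, smul_eq_mul] at hconv
  linarith

theorem ball_subset_subdiffSet_ball (hcont : ContinuousOn f (closedBall 0 1))
    {v : EuclideanSpace ℝ (Fin d)} {β : ℝ} (hvβ : ∀ ℓ ∈ sphere 0 1, ⟪v, ℓ⟫ + β ≤ f ℓ)
    {x : EuclideanSpace ℝ (Fin d)} (hx : x ∈ closedBall 0 1) :
    ball v ((⟪v, x⟫ + β - f x) / 2) ⊆ subdiffSet (ball 0 1) f (ball 0 1) := by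
  intro w hw
  rw [mem_ball, dist_eq_norm] at hw
  obtain ⟨z, hz, hmin⟩ := (isCompact_closedBall (0 : EuclideanSpace ℝ (Fin d)) 1).exists_isMinOn
    (f := fun y ↦ f y - ⟪w, y⟫) ⟨0, mem_closedBall_self zero_le_one⟩
    (hcont.sub (continuous_const.inner continuous_id).continuousOn)
  -- on the sphere `f - ⟪w, ·⟫` stays above `β - ‖w - v‖`, while at `x` it is below that
  have hz_ball : z ∈ ball (0 : EuclideanSpace ℝ (Fin d)) 1 := by
    refine lt_of_le_of_ne (mem_closedBall.mp hz) fun hz_sphere ↦ ?_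
    have hzv := hvβ z hz_sphere
    have hzx := isMinOn_iff.mp hmin x hx
    have hCSz := abs_le.mp (abs_real_inner_le_of_mem_closedBall (w - v) hz)
    have hCSx := abs_le.mp (abs_real_inner_le_of_mem_closedBall (w - v) hx)
    simp only [inner_sub_left, mul_one] at hzx hCSz hCSx
    linarith
  exact mem_iUnion₂.mpr
    ⟨z, hz_ball, mem_subdiff_iff_isMinOn.mpr (hmin.on_subset ball_subset_closedBall)⟩

theorem mem_upperBounds_affineMinorantValues (hcont : ContinuousOn f (closedBall 0 1))
    (hvol : volume (subdiffSet (ball 0 1) f (ball 0 1)) = 0) {x : EuclideanSpace ℝ (Fin d)}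
    (hx : x ∈ closedBall 0 1) : f x ∈ upperBounds (affineMinorantValues (sphere 0 1) f x) := by
  rintro _ ⟨v, β, hvβ, rfl⟩
  by_contra! hlt
  exact (measure_ball_pos volume v (by linarith)).ne'
    (measure_mono_null (ball_subset_subdiffSet_ball hcont hvβ hx) hvol)

theorem subdiffSet_ball_subset_not_differentiableAt [NeZero d]
    (hcont : ContinuousOn f (closedBall 0 1)) (hconv : ConvexOn ℝ (closedBall 0 1) f)
    (henv : ∀ x ∈ ball (0 : EuclideanSpace ℝ (Fin d)) 1,
      f x ∈ upperBounds (affineMinorantValues (sphere 0 1) f x)) :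
    subdiffSet (ball 0 1) f (ball 0 1) ⊆
      {p | ¬DifferentiableAt ℝ (conjugateOn (closedBall 0 1) f) p} := by
  intro p hp
  obtain ⟨x, hx, hpx⟩ := mem_iUnion₂.mp hp
  have hint := interior_closedBall (0 : EuclideanSpace ℝ (Fin d)) one_ne_zero
  have hminx : IsMinOn (fun y ↦ f y - ⟪p, y⟫) (closedBall 0 1) x :=
    mem_subdiff_iff_isMinOn.mp (hconv.mem_subdiff_of_mem_subdiff_interior (hint ▸ hx) (hint ▸ hpx))
  obtain ⟨z, hz, hminz⟩ := (isCompact_sphere (0 : EuclideanSpace ℝ (Fin d)) 1).exists_isMinOn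
    (f := fun y ↦ f y - ⟪p, y⟫) (NormedSpace.sphere_nonempty.mpr zero_le_one)
    ((hcont.mono sphere_subset_closedBall).sub (continuous_const.inner continuous_id).continuousOn)
  -- `⟪p, ·⟫ + (f z - ⟪p, z⟫)` is an affine minorant of `f` on the sphere
  have hzx : f z - ⟪p, z⟫ ≤ f x - ⟪p, x⟫ := by
    have := henv x hx ⟨p, f z - ⟪p, z⟫, fun ℓ hℓ ↦ by linarith [isMinOn_iff.mp hminz ℓ hℓ], rfl⟩
    linarith
  have hminz' : IsMinOn (fun y ↦ f y - ⟪p, y⟫) (closedBall 0 1) z :=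
    isMinOn_iff.mpr fun y hy ↦ hzx.trans (isMinOn_iff.mp hminx y hy)
  refine not_differentiableAt_conjugateOn (isCompact_closedBall 0 1) hcont
    (ball_subset_closedBall hx) (sphere_subset_closedBall hz) hminx hminz' ?_
  rintro rfl
  exact (mem_ball_zero_iff.mp hx).ne (mem_sphere_zero_iff_norm.mp hz)

theorem volume_subdiffSet_ball_eq_zero [NeZero d]
    (hcont : ContinuousOn f (closedBall 0 1)) (hconv : ConvexOn ℝ (closedBall 0 1) f)
    (henv : ∀ x ∈ ball (0 : EuclideanSpace ℝ (Fin d)) 1,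
      f x ∈ upperBounds (affineMinorantValues (sphere 0 1) f x)) :
    volume (subdiffSet (ball 0 1) f (ball 0 1)) = 0 :=
  measure_mono_null (subdiffSet_ball_subset_not_differentiableAt hcont hconv henv) <|
    ae_iff.mp (lipschitzWith_conjugateOn (isCompact_closedBall 0 1)
      ⟨0, mem_closedBall_self zero_le_one⟩ hcont (r := 1) (by rw [NNReal.coe_one])
      ).ae_differentiableAt

end Subdifferential

/-- Let `h` be continuous and convex on the closed unit ball of `ℝ^d`
and let `g` be its restriction to the unit sphere.  Then the Monge–Ampère measure of `h`
on the open ball vanishes, `L(∂h(B)) = 0`, if and only if `h` is the convex envelope of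
`g`, i.e. `h x = sup {a x : a affine, a ≤ g on the sphere}` for every `x` in the closed
ball. -/
theorem stmt17 (d : ℕ) (hd : 1 ≤ d) (h : EuclideanSpace ℝ (Fin d) → ℝ)
    (hcont : ContinuousOn h (Metric.closedBall (0 : EuclideanSpace ℝ (Fin d)) 1))
    (hconv : ConvexOn ℝ (Metric.closedBall (0 : EuclideanSpace ℝ (Fin d)) 1) h) :
    volume (subdiffSet (Metric.ball (0 : EuclideanSpace ℝ (Fin d)) 1) h
        (Metric.ball (0 : EuclideanSpace ℝ (Fin d)) 1)) = 0
      ↔ ∀ x ∈ Metric.closedBall (0 : EuclideanSpace ℝ (Fin d)) 1,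
          h x = sSup {y : ℝ | ∃ v : EuclideanSpace ℝ (Fin d), ∃ β : ℝ,
            (∀ ℓ ∈ Metric.sphere (0 : EuclideanSpace ℝ (Fin d)) 1, ⟪v, ℓ⟫ + β ≤ h ℓ) ∧
            y = ⟪v, x⟫ + β} := by
  have : NeZero d := ⟨by omega⟩
  have hgt : ∀ x ∈ closedBall 0 1, ∀ a < h x,
      ∃ b ∈ affineMinorantValues (sphere 0 1) h x, a < b :=
    fun _ hx _ ↦ exists_mem_affineMinorantValues_gt isClosed_closedBall sphere_subset_closedBall
      hcont.lowerSemicontinuousOn hconv hx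
  refine ⟨fun hvol x hx ↦ ?_, fun henv ↦ volume_subdiffSet_ball_eq_zero hcont hconv ?_⟩
  · obtain ⟨a, ha, -⟩ := hgt x hx _ (sub_one_lt (h x))
    exact (csSup_eq_of_forall_le_of_forall_lt_exists_gt ⟨a, ha⟩
      (mem_upperBounds_affineMinorantValues hcont hvol hx) (hgt x hx)).symm
  · intro x hx a ha
    have hbdd : BddAbove (affineMinorantValues (sphere 0 1) h x) :=
      bddAbove_affineMinorantValues
        ((isCompact_sphere 0 1).bddAbove_image (hcont.mono sphere_subset_closedBall))
        (by rw [convexHull_sphere_eq_closedBall 0 zero_le_one]; exact ball_subset_closedBall hx)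
    rw [henv x (ball_subset_closedBall hx)]
    exact le_csSup hbdd ha
end
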